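/- arXiv:2510.20170 — 9 statements merged into one kernel-verified Lean document; each statement's English description precedes it below -/
import Mathlib

section
/- Let (R, m) be a one-dimensional Cohen–Macaulay Noetherian local ring, let B = m : m = {β ∈ Q(R) | β·m ⊆ m}, and let X be a fractional ideal of R. Then X·m = m if and only if X·B = B (products and colons taken as R-submodules of Q(R)). -/
open IsLocalRing

/-- The depth of a module `M` over a Noetherian local ring `R`: the supremum of the lengths
of `M`-regular sequences contained in the maximal ideal of `R`. -/
noncomputable def moduleDepth (R M : Type*) [CommRing R] [IsLocalRing R]
    [AddCommGroup M] [Module R M] : ℕ∞ :=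
  sSup {n : ℕ∞ | ∃ rs : List R, (rs.length : ℕ∞) = n ∧
    (∀ r ∈ rs, r ∈ maximalIdeal R) ∧ RingTheory.Sequence.IsRegular M rs}

set_option maxHeartbeats 1000000 in
set_option synthInstance.maxHeartbeats 400000 in
/-- Let `(R, m)` be a one-dimensional Cohen–Macaulay Noetherian local ring (`dim R = 1` and
`depth R = 1`), let `mQ` denote the image of `m` in the total quotient ring `Q(R)`
(the fraction ring of `R`), let `B = m : m = {β ∈ Q(R) | β·m ⊆ m}`, and let `X` be a
fractional ideal of `R` (a finitely generated `R`-submodule of `Q(R)` containing a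
non-zerodivisor of `R`). Then `X·m = m` if and only if `X·B = B`. -/
theorem fractional_mul_maximalIdeal_eq_iff_mul_endB_eq {R : Type*} [CommRing R]
    [IsNoetherianRing R] [IsLocalRing R]
    (hdim : ringKrullDim R = 1) (hdepth : moduleDepth R R = 1)
    (mQ : Submodule R (FractionRing R))
    (hmQ : mQ = Submodule.map (Algebra.linearMap R (FractionRing R)) (maximalIdeal R))
    (B : Submodule R (FractionRing R))
    (hB : ∀ β : FractionRing R, β ∈ B ↔ ∀ x ∈ mQ, β * x ∈ mQ)
    (X : Submodule R (FractionRing R)) (hXfg : X.FG)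
    (hXnzd : ∃ r ∈ nonZeroDivisors R, algebraMap R (FractionRing R) r ∈ X) :
    X * mQ = mQ ↔ X * B = B := by
  classical
  set Q := FractionRing R
  have h1B : (1 : Q) ∈ B := (hB 1).2 fun x hx => by simpa using hx
  have hBm : B * mQ = mQ := by
    apply le_antisymm
    · exact Submodule.mul_le.2 fun b hb x hx => (hB b).1 hb x hx
    · intro x hx
      simpa using Submodule.mul_mem_mul h1B hx
  have hBB : B * B ≤ B := Submodule.mul_le.2 fun b hb c hc => (hB _).2 fun x hx => by
    rw [mul_assoc]; exact (hB b).1 hb _ ((hB c).1 hc x hx)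
  constructor
  · -- hard direction
    intro hXm
    have hXle : X ≤ B := fun x hx => (hB x).2 fun y hy => hXm ▸ Submodule.mul_mem_mul hx hy
    have hXBle : X * B ≤ B := le_trans (mul_le_mul' hXle le_rfl) hBB
    -- get nonzerodivisor a in maximal ideal
    obtain ⟨a, ham, hanzd⟩ : ∃ a, a ∈ maximalIdeal R ∧ a ∈ nonZeroDivisors R := by
      have hne : ¬ ∀ s ∈ {n : ℕ∞ | ∃ rs : List R, (rs.length : ℕ∞) = n ∧
          (∀ r ∈ rs, r ∈ maximalIdeal R) ∧ RingTheory.Sequence.IsRegular R rs}, s ≤ 0 := by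
        intro h
        have := sSup_le h
        rw [← moduleDepth, hdepth] at this
        exact absurd this (by norm_num)
      push_neg at hne
      obtain ⟨s, hs, hs0⟩ := hne
      have hsle : s ≤ 1 := by
        have := le_sSup hs
        rwa [← moduleDepth, hdepth] at this
      have hs1 : s = 1 := le_antisymm hsle (ENat.one_le_iff_ne_zero.2 hs0.ne')
      obtain ⟨rs, hlen, hmem, hreg⟩ := hs
      rw [hs1] at hlen
      have : rs.length = 1 := by exact_mod_cast hlen
      obtain ⟨a, rfl⟩ := List.length_eq_one_iff.1 this
      refine ⟨a, hmem a (by simp), ?_⟩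
      have hsr : IsSMulRegular R a :=
        (RingTheory.Sequence.isWeaklyRegular_singleton_iff R a).1 hreg.toIsWeaklyRegular
      rw [mem_nonZeroDivisors_iff_right]
      intro x hx
      exact hsr (by simpa [smul_eq_mul, mul_comm] using hx)
    have haQ : algebraMap R Q a ∈ mQ := by
      rw [hmQ]; exact ⟨a, ham, rfl⟩
    have haunit : IsUnit (algebraMap R Q a) :=
      IsLocalization.map_units (M := nonZeroDivisors R) Q ⟨a, hanzd⟩
    -- the subalgebra B
    let A : Subalgebra R Q := B.toSubalgebra h1B (fun x y hx hy => hBB (Submodule.mul_mem_mul hx hy))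
    -- mQ as an A-submodule
    let M' : Submodule A Q :=
      { carrier := mQ
        add_mem' := fun ha hb => mQ.add_mem ha hb
        zero_mem' := mQ.zero_mem
        smul_mem' := fun c x hx => by
          have : (c : Q) * x ∈ mQ := (hB c).1 c.2 x hx
          simpa [Algebra.smul_def] using this }
    have hM'mem : ∀ x : Q, x ∈ M' ↔ x ∈ mQ := fun x => Iff.rfl
    have hmQfg : mQ.FG := by
      rw [hmQ]
      exact Submodule.FG.map _ (IsNoetherian.noetherian _)
    have hM'fg : M'.FG := by
      obtain ⟨s, hs⟩ := hmQfg
      refine ⟨s, le_antisymm (Submodule.span_le.2 ?_) ?_⟩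
      · intro x hx
        have : x ∈ mQ := hs ▸ Submodule.subset_span hx
        exact this
      · intro x hx
        have hx' : x ∈ Submodule.span R (s : Set Q) := hs ▸ hx
        exact Submodule.span_subset_span R A _ hx'
    let I : Ideal A := Ideal.span {c : A | (c : Q) ∈ X}
    have hle : M' ≤ I • M' := by
      intro y hy
      have hy' : y ∈ mQ := hy
      have : y ∈ X * mQ := by rw [hXm]; exact hy'
      refine Submodule.mul_induction_on this (fun x hx z hz => ?_) (fun z w hz hw => Submodule.add_mem _ hz hw)
      have hxB : x ∈ B := hXle hx
      have : (⟨x, hxB⟩ : A) ∈ I := Ideal.subset_span hx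
      have := Submodule.smul_mem_smul this (show z ∈ M' from hz)
      simpa [Algebra.smul_def] using this
    obtain ⟨r, hr1, hr0⟩ :=
      Submodule.exists_sub_one_mem_and_smul_eq_zero_of_fg_of_le_smul I M' hM'fg hle
    have hra : (r : Q) * algebraMap R Q a = 0 := by
      have := hr0 _ (show algebraMap R Q a ∈ M' from haQ)
      simpa [Algebra.smul_def] using this
    have hrz : (r : Q) = 0 := by
      rcases haunit with ⟨u, hu⟩
      have := congrArg (· * (↑u⁻¹ : Q)) hra
      simpa [← hu, mul_assoc] using this
    have hr : r = 0 := Subtype.ext hrz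
    have hI1 : (1 : A) ∈ I := by
      have : (0 : A) - 1 ∈ I := hr ▸ hr1
      simpa using I.neg_mem this
    -- push to X * B
    have hXB1 : (1 : Q) ∈ X * B := by
      have key : ∀ c ∈ I, (c : Q) ∈ X * B := by
        intro c hc
        refine Submodule.span_induction ?_ ?_ ?_ ?_ hc
        · intro z hz
          simpa using Submodule.mul_mem_mul hz h1B
        · simp
        · intro z w _ _ hz hw
          simpa [add_mul] using Submodule.add_mem _ hz hw
        · intro c z _ hz
          have : (c : Q) * (z : Q) ∈ B * (X * B) := Submodule.mul_mem_mul c.2 hz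
          have h2 : B * (X * B) ≤ X * B := by
            rw [mul_comm B (X * B), mul_assoc]
            exact mul_le_mul' le_rfl hBB
          simpa [Algebra.smul_def] using h2 this
      simpa using key 1 hI1
    apply le_antisymm hXBle
    intro b hb
    have : b * 1 ∈ B * (X * B) := Submodule.mul_mem_mul hb hXB1
    have h2 : B * (X * B) ≤ X * B := by
      rw [mul_comm B (X * B), mul_assoc]
      exact mul_le_mul' le_rfl hBB
    simpa using h2 this
  · intro hXB
    calc X * mQ = X * (B * mQ) := by rw [hBm]
    _ = (X * B) * mQ := by rw [mul_assoc]
    _ = B * mQ := by rw [hXB]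
    _ = mQ := hBm
end

section
/- Let A = A₀ ⊕ A₁ be a ℤ/2ℤ-graded commutative ring. Then A is a Noetherian ring (respectively, an Artinian ring) if and only if A₀ is a Noetherian ring (respectively, an Artinian ring) and A₁ is a finitely generated A₀-module. -/
/-! Auxiliary: commutative Hopkins–Levitzki (Artinian ring ⇒ Noetherian ring). -/

section Hopkins

variable {R : Type*} [CommRing R] [IsArtinianRing R]

private lemma aux_reduced : IsReduced (R ⧸ (Ideal.jacobson (⊥ : Ideal R))) := by
  constructor
  intro x hx
  obtain ⟨r, rfl⟩ := Ideal.Quotient.mk_surjective x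
  obtain ⟨k, hk⟩ := hx
  rw [← map_pow, Ideal.Quotient.eq_zero_iff_mem] at hk
  have hr : IsNilpotent r := by
    obtain ⟨n, hn⟩ := IsArtinianRing.isNilpotent_jacobson_bot (R := R)
    refine ⟨k * n, ?_⟩
    have := Ideal.pow_mem_pow hk n
    rw [hn] at this
    simpa [pow_mul] using this
  have h1 : r ∈ Ideal.radical (⊥ : Ideal R) := by
    obtain ⟨n, hn⟩ := hr
    exact ⟨n, by simp [hn]⟩
  have : r ∈ Ideal.jacobson (⊥ : Ideal R) := Ideal.radical_le_jacobson (I := (⊥ : Ideal R)) h1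
  rwa [Ideal.Quotient.eq_zero_iff_mem]

private lemma aux_noeth_of_art :
    ∀ (n : ℕ) (M : Type*) [AddCommGroup M] [Module R M] [IsArtinian R M],
      ((Ideal.jacobson (⊥ : Ideal R)) ^ n • (⊤ : Submodule R M) = ⊥) → IsNoetherian R M := by
  intro n
  induction n with
  | zero =>
    intro M _ _ _ h
    rw [pow_zero, Ideal.one_eq_top, Submodule.top_smul] at h
    haveI : Subsingleton M := ⟨fun a b => by
      have ha : a ∈ (⊥ : Submodule R M) := h ▸ Submodule.mem_top
      have hb : b ∈ (⊥ : Submodule R M) := h ▸ Submodule.mem_top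
      rw [Submodule.mem_bot] at ha hb; rw [ha, hb]⟩
    haveI : Finite M := Finite.of_subsingleton
    infer_instance
  | succ n ih =>
    intro M _ _ _ h
    set J : Ideal R := Ideal.jacobson (⊥ : Ideal R) with hJ
    set N : Submodule R M := J • ⊤ with hN
    -- N is Noetherian by induction
    haveI hNn : IsNoetherian R N := by
      apply ih
      apply Submodule.map_injective_of_injective N.injective_subtype
      rw [Submodule.map_smul'', Submodule.map_bot, Submodule.map_top, Submodule.range_subtype]
      rw [hN, ← Submodule.smul_assoc, smul_eq_mul, ← pow_succ]
      exact h
    -- M ⧸ N Noetherian via semisimple quotient ring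
    haveI hsc : IsScalarTower R (R ⧸ J) (M ⧸ N) :=
      Module.IsTorsionBySet.isScalarTower (Module.isTorsionBySet_quotient_ideal_smul M J)
    haveI : IsReduced (R ⧸ J) := aux_reduced
    haveI : IsSemisimpleRing (R ⧸ J) := IsArtinianRing.isSemisimpleRing_of_isReduced (R ⧸ J)
    haveI hart : IsArtinian (R ⧸ J) (M ⧸ N) := isArtinian_of_tower R inferInstance
    haveI hnoe : IsNoetherian (R ⧸ J) (M ⧸ N) :=
      (IsSemisimpleModule.finite_tfae.out 1 2).mpr hart
    have hQ : IsNoetherian R (M ⧸ N) := by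
      rw [isNoetherian_iff'] at hnoe ⊢
      -- order embedding from R-submodules into (R⧸J)-submodules
      let e : Submodule R (M ⧸ N) ↪o Submodule (R ⧸ J) (M ⧸ N) :=
        OrderEmbedding.ofMapLEIff
          (fun P => { carrier := P
                      add_mem' := fun ha hb => P.add_mem ha hb
                      zero_mem' := P.zero_mem
                      smul_mem' := by
                        intro c x hx
                        obtain ⟨r, rfl⟩ := Ideal.Quotient.mk_surjective c
                        have : (Ideal.Quotient.mk J r) • x = r • x := by
                          rw [← Ideal.Quotient.algebraMap_eq, algebraMap_smul]
                        rw [this]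
                        exact P.smul_mem r hx })
          (fun P Q => Iff.rfl)
      exact e.dual.ltEmbedding.isWellFounded
    exact (isNoetherian_iff_submodule_quotient N).mpr ⟨hNn, hQ⟩

private lemma artinian_to_noetherian : IsNoetherianRing R := by
  obtain ⟨n, hn⟩ := IsArtinianRing.isNilpotent_jacobson_bot (R := R)
  apply aux_noeth_of_art n R
  rw [hn]
  simp

end Hopkins

section Graded

variable {A : Type*} [CommRing A] {A₀ : Subring A} {A₁ : Submodule A₀ A}

private lemma key_decomp (hgr : ∀ x ∈ A₁, ∀ y ∈ A₁, x * y ∈ A₀)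
    (hspan : A₀.toAddSubgroup ⊔ A₁.toAddSubgroup = ⊤)
    (N : Submodule A₀ A) (s : Set A) (hs : s ⊆ N) :
    ∀ z ∈ Ideal.span s, ∃ p ∈ N, ∃ q ∈ N * A₁, z = p + q := by
  intro z hz
  induction hz using Submodule.span_induction with
  | mem x hx => exact ⟨x, hs hx, 0, zero_mem _, (add_zero x).symm⟩
  | zero => exact ⟨0, zero_mem _, 0, zero_mem _, by simp⟩
  | add x y hx hy ihx ihy =>
    obtain ⟨p, hp, q, hq, rfl⟩ := ihx
    obtain ⟨p', hp', q', hq', rfl⟩ := ihy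
    exact ⟨p + p', add_mem hp hp', q + q', add_mem hq hq', by ring⟩
  | smul a x hx ihx =>
    obtain ⟨p, hp, q, hq, rfl⟩ := ihx
    have ha : a ∈ A₀.toAddSubgroup ⊔ A₁.toAddSubgroup := hspan ▸ AddSubgroup.mem_top a
    obtain ⟨a₀, ha₀, m, hm, rfl⟩ := AddSubgroup.mem_sup.mp ha
    have hm' : m ∈ A₁ := hm
    have hmq : m * q ∈ N := by
      refine Submodule.mul_induction_on hq (fun n hn y hy => ?_) (fun u v hu hv => ?_)
      · have h0 : m * y ∈ A₀ := hgr m hm' y hy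
        have heq : m * (n * y) = (⟨m * y, h0⟩ : A₀) • n := by
          show m * (n * y) = (m * y) * n
          ring
        rw [heq]
        exact N.smul_mem _ hn
      · rw [mul_add]; exact add_mem hu hv
    have hmp : m * p ∈ N * A₁ := by
      rw [show m * p = p * m from mul_comm m p]
      exact Submodule.mul_mem_mul hp hm'
    have h1 : (⟨a₀, ha₀⟩ : A₀) • p ∈ N := N.smul_mem _ hp
    have h2 : (⟨a₀, ha₀⟩ : A₀) • q ∈ N * A₁ := Submodule.smul_mem _ _ hq
    refine ⟨(⟨a₀, ha₀⟩ : A₀) • p + m * q, add_mem h1 hmq,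
      (⟨a₀, ha₀⟩ : A₀) • q + m * p, add_mem h2 hmp, ?_⟩
    show (a₀ + m) • (p + q) = (a₀ • p + m * q) + (a₀ • q + m * p)
    show (a₀ + m) * (p + q) = (a₀ * p + m * q) + (a₀ * q + m * p)
    ring

private lemma comap_map_eq (hgr : ∀ x ∈ A₁, ∀ y ∈ A₁, x * y ∈ A₀)
    (hdisj : A₀.toAddSubgroup ⊓ A₁.toAddSubgroup = ⊥)
    (hspan : A₀.toAddSubgroup ⊔ A₁.toAddSubgroup = ⊤) (J : Ideal A₀) :
    Ideal.comap (algebraMap A₀ A) (Ideal.map (algebraMap A₀ A) J) = J := by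
  refine le_antisymm ?_ Ideal.le_comap_map
  intro z hz
  have hz' : (z : A) ∈ Ideal.span ((algebraMap A₀ A) '' J) := hz
  obtain ⟨p, hp, q, hq, hzeq⟩ :=
    key_decomp hgr hspan (Submodule.map (Algebra.linearMap A₀ A) J) _
      (fun x hx => by
        rcases hx with ⟨j, hj, rfl⟩
        exact ⟨j, hj, rfl⟩) _ hz'
  have hq1 : q ∈ A₁ := by
    refine Submodule.mul_le.mpr (fun n hn y hy => ?_) hq
    obtain ⟨j, hj, rfl⟩ := hn
    exact A₁.smul_mem j hy
  obtain ⟨j, hj, rfl⟩ := hp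
  have hzeq' : (z : A) = (j : A) + q := hzeq
  have hq0 : q ∈ A₀.toAddSubgroup ⊓ A₁.toAddSubgroup := by
    refine ⟨?_, hq1⟩
    have hqq : q = (z : A) - (j : A) := by rw [hzeq']; ring
    rw [hqq]
    exact A₀.toAddSubgroup.sub_mem z.2 j.2
  rw [hdisj] at hq0
  have hq2 : q = 0 := hq0
  have hzj : z = j := Subtype.ext (by rw [hzeq', hq2, add_zero])
  rw [hzj]; exact hj

end Graded

/-- A `ℤ/2ℤ`-graded commutative ring is a commutative ring `A` together with a subring `A₀`
(the degree-zero part) and an `A₀`-submodule `A₁` of `A` (the degree-one part) such that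
`A = A₀ ⊕ A₁` as an additive group and products of two degree-one elements have degree zero.
(Closure of `A₀·A₀` in `A₀` and of `A₀·A₁` in `A₁` is built into the `Subring`/`Submodule`
structures.)

Statement: `A` is Noetherian (resp. Artinian) iff `A₀` is Noetherian (resp. Artinian) and
`A₁` is a finitely generated `A₀`-module. -/
theorem noetherian_artinian_iff_of_z2graded {A : Type*} [CommRing A]
    (A₀ : Subring A) (A₁ : Submodule A₀ A)
    (hgr : ∀ x ∈ A₁, ∀ y ∈ A₁, x * y ∈ A₀)
    (hdisj : A₀.toAddSubgroup ⊓ A₁.toAddSubgroup = ⊥)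
    (hspan : A₀.toAddSubgroup ⊔ A₁.toAddSubgroup = ⊤) :
    (IsNoetherianRing A ↔ IsNoetherianRing A₀ ∧ A₁.FG) ∧
    (IsArtinianRing A ↔ IsArtinianRing A₀ ∧ A₁.FG) := by
  -- order embedding of ideals of A₀ into ideals of A
  let e : Ideal A₀ ↪o Ideal A :=
    OrderEmbedding.ofMapLEIff (fun J => Ideal.map (algebraMap A₀ A) J)
      (fun J₁ J₂ => ⟨fun h => by
          have := Ideal.comap_mono (f := algebraMap A₀ A) h
          rwa [comap_map_eq hgr hdisj hspan, comap_map_eq hgr hdisj hspan] at this,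
        fun h => Ideal.map_mono h⟩)
  -- A Noetherian → A₀ Noetherian
  have hNfwd : IsNoetherianRing A → IsNoetherianRing A₀ := by
    intro h
    rw [isNoetherianRing_iff, isNoetherian_iff'] at h ⊢
    exact e.dual.ltEmbedding.isWellFounded
  have hAfwd : IsArtinianRing A → IsArtinianRing A₀ := by
    intro h
    exact e.ltEmbedding.isWellFounded
  -- A Noetherian → A₁ f.g.
  have hFG : IsNoetherianRing A → A₁.FG := by
    intro h
    have hI : (Ideal.span (A₁ : Set A)).FG := IsNoetherian.noetherian _
    obtain ⟨G, hG⟩ := hI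
    have hmem : ∀ g ∈ G, ∃ Tg : Finset A, ↑Tg ⊆ (A₁ : Set A) ∧
        g ∈ Submodule.span A (Tg : Set A) := by
      intro g hg
      have hgmem : g ∈ Ideal.span (A₁ : Set A) := by
        rw [← hG]; exact Ideal.subset_span (Finset.mem_coe.mpr hg)
      exact Submodule.mem_span_finite_of_mem_span hgmem
    choose T hT1 hT2 using hmem
    classical
    let S : Finset A := G.attach.biUnion (fun g => T g g.2)
    have hS1 : (S : Set A) ⊆ (A₁ : Set A) := by
      intro x hx
      simp only [S, Finset.coe_biUnion, Set.mem_iUnion, Finset.mem_coe] at hx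
      obtain ⟨g, _, hx⟩ := hx
      exact hT1 g g.2 hx
    have hSspan : Ideal.span (A₁ : Set A) ≤ Ideal.span (S : Set A) := by
      rw [← hG, Ideal.span_le]
      intro g hg
      refine Submodule.span_mono ?_ (hT2 g hg)
      intro x hx
      simp only [S, Finset.coe_biUnion, Set.mem_iUnion, Finset.mem_coe]
      exact ⟨⟨g, hg⟩, Finset.mem_attach _ _, hx⟩
    refine ⟨S, le_antisymm ?_ ?_⟩
    · rw [Submodule.span_le]; exact hS1
    · intro x hx
      have hx' : x ∈ Ideal.span (S : Set A) := hSspan (Ideal.subset_span hx)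
      obtain ⟨p, hp, q, hq, rfl⟩ :=
        key_decomp hgr hspan (Submodule.span A₀ (S : Set A)) _ Submodule.subset_span _ hx'
      have hNle : Submodule.span A₀ (S : Set A) ≤ A₁ := Submodule.span_le.mpr hS1
      have hq0 : q ∈ A₀.toAddSubgroup ⊓ A₁.toAddSubgroup := by
        constructor
        · have hq1 : q ∈ (1 : Submodule A₀ A) := by
            refine Submodule.mul_le.mpr (fun n hn y hy => ?_) hq
            rw [Submodule.mem_one]
            exact ⟨⟨n * y, hgr n (hNle hn) y hy⟩, rfl⟩
          rw [Submodule.mem_one] at hq1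
          obtain ⟨c, rfl⟩ := hq1
          exact c.2
        · have : p + q - p ∈ A₁ := A₁.sub_mem hx (hNle hp)
          simpa using this
      rw [hdisj] at hq0
      have : q = 0 := hq0
      rw [this, add_zero]
      exact hp
  -- converse: f.g. gives Module.Finite A₀ A
  have hfin : A₁.FG → Module.Finite A₀ A := by
    intro hfg
    obtain ⟨T, hT⟩ := hfg
    classical
    refine ⟨⟨insert 1 T, ?_⟩⟩
    rw [eq_top_iff]
    intro x _
    have hx : x ∈ A₀.toAddSubgroup ⊔ A₁.toAddSubgroup := hspan ▸ AddSubgroup.mem_top x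
    obtain ⟨a, ha, m, hm, rfl⟩ := AddSubgroup.mem_sup.mp hx
    refine add_mem ?_ ?_
    · have : a = (⟨a, ha⟩ : A₀) • (1 : A) := by
        show a = a * 1; ring
      rw [this]
      exact Submodule.smul_mem _ _
        (Submodule.subset_span (by simp : (1 : A) ∈ (insert 1 T : Finset A)))
    · have hm' : m ∈ Submodule.span A₀ (T : Set A) := hT.symm ▸ hm
      refine Submodule.span_mono ?_ hm'
      intro y hy; simp [hy]
  constructor
  · constructor
    · intro h; exact ⟨hNfwd h, hFG h⟩
    · rintro ⟨h₀, hfg⟩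
      haveI := h₀
      haveI := hfin hfg
      exact isNoetherian_of_tower A₀ (isNoetherian_of_isNoetherianRing_of_finite A₀ A)
  · constructor
    · intro h
      haveI := h
      haveI : IsNoetherianRing A := artinian_to_noetherian
      exact ⟨hAfwd h, hFG this⟩
    · rintro ⟨h₀, hfg⟩
      haveI := h₀
      haveI := hfin hfg
      exact isArtinian_of_tower A₀ (isArtinian_of_fg_of_artinian')
end

section
/- Let A = A₀ ⊕ A₁ be a ℤ/2ℤ-graded commutative ring. (a) If A is a local ring, then A₀ is a local ring. (b) Conversely, if A₀ is a local ring with maximal ideal m₀ and x·y ∈ m₀ for all x, y ∈ A₁, then A is a local ring whose maximal ideal is m₀ ⊕ A₁. -/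
/-- Let `A = A₀ ⊕ A₁` be a `ℤ/2ℤ`-graded commutative ring: `A₀` is a subring, `A₁` an
`A₀`-submodule of `A`, `A = A₀ ⊕ A₁` as an additive group, and `A₁·A₁ ⊆ A₀`.

(a) If `A` is a local ring then `A₀` is a local ring.
(b) Conversely, if `A₀` is a local ring and `x·y` lies in the maximal ideal of `A₀`
(equivalently, `x·y` is a non-unit of `A₀`) for all `x, y ∈ A₁`, then `A` is a local ring
whose maximal ideal is `m₀ ⊕ A₁`, i.e. consists exactly of the elements `a + x` with
`a` a non-unit of `A₀` and `x ∈ A₁`. -/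
theorem local_iff_of_z2graded {A : Type*} [CommRing A]
    (A₀ : Subring A) (A₁ : Submodule A₀ A)
    (hgr : ∀ x ∈ A₁, ∀ y ∈ A₁, x * y ∈ A₀)
    (hdisj : A₀.toAddSubgroup ⊓ A₁.toAddSubgroup = ⊥)
    (hspan : A₀.toAddSubgroup ⊔ A₁.toAddSubgroup = ⊤) :
    (IsLocalRing A → IsLocalRing A₀) ∧
    (IsLocalRing A₀ →
      (∀ x ∈ A₁, ∀ y ∈ A₁, ∀ h : x * y ∈ A₀, ¬ IsUnit (⟨x * y, h⟩ : A₀)) →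
      (IsLocalRing A ∧ ∀ I : Ideal A, I.IsMaximal →
        (I : Set A) = {z : A | ∃ a : A₀, ¬ IsUnit a ∧ ∃ x ∈ A₁, z = ↑a + x})) := by
  -- decomposition of any element
  have hdec : ∀ z : A, ∃ a : A₀, ∃ x ∈ A₁, z = ↑a + x := by
    intro z
    have hz : z ∈ A₀.toAddSubgroup ⊔ A₁.toAddSubgroup := hspan ▸ AddSubgroup.mem_top z
    rw [AddSubgroup.mem_sup] at hz
    obtain ⟨a, ha, x, hx, h⟩ := hz
    exact ⟨⟨a, ha⟩, x, hx, h.symm⟩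
  -- intersection is zero
  have hzero : ∀ u : A, u ∈ A₀ → u ∈ A₁ → u = 0 := by
    intro u h0 h1
    have hu : u ∈ A₀.toAddSubgroup ⊓ A₁.toAddSubgroup := ⟨h0, h1⟩
    rw [hdisj, AddSubgroup.mem_bot] at hu
    exact hu
  -- A₀ · A₁ ⊆ A₁
  have hmul01 : ∀ a : A₀, ∀ x ∈ A₁, (↑a : A) * x ∈ A₁ := by
    intro a x hx
    have := A₁.smul_mem a hx
    simpa [Subring.smul_def] using this
  -- an element of A₀ that is a unit in A is a unit in A₀
  have hunit_down : ∀ a : A₀, IsUnit (↑a : A) → IsUnit a := by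
    rintro a ⟨u, hu⟩
    obtain ⟨b, x, hx, hb⟩ := hdec (↑u⁻¹ : A)
    have h1 : (↑a : A) * ↑u⁻¹ = 1 := by rw [← hu]; exact u.mul_inv
    have h2 : ((↑a : A) * ↑b) + (↑a : A) * x = 1 := by rw [← mul_add, ← hb]; exact h1
    have hx1 : (↑a : A) * x ∈ A₁ := hmul01 a x hx
    have heq : (↑a : A) * x = 1 - (↑a : A) * ↑b := eq_sub_of_add_eq' h2
    have hx0 : (↑a : A) * x ∈ A₀ := heq ▸ A₀.sub_mem A₀.one_mem (A₀.mul_mem a.2 b.2)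
    have hxz : (↑a : A) * x = 0 := hzero _ hx0 hx1
    have hab : (↑a : A) * ↑b = 1 := by rw [hxz, add_zero] at h2; exact h2
    exact IsUnit.of_mul_eq_one (a := a) b (Subtype.ext (by push_cast; exact hab))
  constructor
  · -- (a)
    intro hA
    haveI := hA
    haveI : Nontrivial A₀ :=
      ⟨⟨0, 1, fun h => zero_ne_one (α := A) (by simpa using congrArg Subtype.val h)⟩⟩
    apply IsLocalRing.of_isUnit_or_isUnit_one_sub_self
    intro a
    rcases IsLocalRing.isUnit_or_isUnit_one_sub_self (↑a : A) with h | h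
    · exact Or.inl (hunit_down a h)
    · refine Or.inr (hunit_down _ ?_)
      push_cast
      exact h
  · -- (b)
    intro hL hm
    haveI := hL
    -- 1 + x is a unit for x ∈ A₁
    have hone_add : ∀ x ∈ A₁, IsUnit ((1 : A) + x) := by
      intro x hx
      have hxx : x * x ∈ A₀ := hgr x hx x hx
      have hu : IsUnit ((1 : A₀) - ⟨x * x, hxx⟩) :=
        IsLocalRing.isUnit_one_sub_self_of_mem_nonunits _
          (mem_nonunits_iff.mpr (hm x hx x hx hxx))
      have hu' : IsUnit ((1 : A) - x * x) := by
        have := hu.map A₀.subtype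
        simpa using this
      have hmul : ((1 : A) + x) * (1 - x) = 1 - x * x := by ring
      exact isUnit_of_mul_isUnit_left (hmul ▸ hu')
    -- key: a + x unit in A ↔ a unit in A₀
    have hkey : ∀ (a : A₀), ∀ x ∈ A₁, (IsUnit ((↑a : A) + x) ↔ IsUnit a) := by
      intro a x hx
      constructor
      · rintro ⟨u, hu⟩
        obtain ⟨b, y, hy, hb⟩ := hdec (↑u⁻¹ : A)
        have h1 : ((↑a : A) + x) * (↑b + y) = 1 := by rw [← hb, ← hu]; exact u.mul_inv
        have hexp : (((↑a : A) * ↑b + x * y) + ((↑a : A) * y + x * ↑b)) = 1 := by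
          rw [← h1]; ring
        have hA0 : ((↑a : A) * ↑b + x * y) ∈ A₀ :=
          A₀.add_mem (A₀.mul_mem a.2 b.2) (hgr x hx y hy)
        have hA1 : ((↑a : A) * y + x * ↑b) ∈ A₁ :=
          A₁.add_mem (hmul01 a y hy) (by rw [mul_comm]; exact hmul01 b x hx)
        have heq : ((↑a : A) * y + x * ↑b) = 1 - ((↑a : A) * ↑b + x * y) :=
          eq_sub_of_add_eq' hexp
        have hz : ((↑a : A) * y + x * ↑b) = 0 :=
          hzero _ (heq ▸ A₀.sub_mem A₀.one_mem hA0) hA1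
        have h3 : ((↑a : A) * ↑b + x * y) = 1 := by rw [hz, add_zero] at hexp; exact hexp
        have h4 : a * b + (⟨x * y, hgr x hx y hy⟩ : A₀) = 1 :=
          Subtype.ext (by push_cast; exact h3)
        by_contra hna
        have : (1 : A₀) ∈ nonunits A₀ := by
          rw [← h4]
          exact IsLocalRing.nonunits_add
            (mul_mem_nonunits_left (mem_nonunits_iff.mpr hna))
            (mem_nonunits_iff.mpr (hm x hx y hy _))
        exact one_notMem_nonunits this
      · rintro ⟨u, hu⟩
        have hx' : (↑(↑u⁻¹ : A₀) : A) * x ∈ A₁ := hmul01 _ x hx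
        have h1 : IsUnit ((1 : A) + ↑(↑u⁻¹ : A₀) * x) := hone_add _ hx'
        have hai : (↑a : A) * ↑(↑u⁻¹ : A₀) = 1 := by
          rw [← hu]
          exact_mod_cast congrArg Subtype.val u.mul_inv
        have hfac : (↑a : A) + x = ↑a * ((1 : A) + ↑(↑u⁻¹ : A₀) * x) := by
          rw [mul_add, mul_one, ← mul_assoc, hai, one_mul]
        rw [hfac]
        exact ((hu ▸ u.isUnit).map A₀.subtype).mul h1
    haveI : Nontrivial A :=
      ⟨⟨1, 0, fun h => one_ne_zero (α := A₀) (Subtype.ext (by simpa using h))⟩⟩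
    have hloc : IsLocalRing A := by
      apply IsLocalRing.of_nonunits_add
      intro a b ha hb
      obtain ⟨a₀, x, hx, rfl⟩ := hdec a
      obtain ⟨b₀, y, hy, rfl⟩ := hdec b
      rw [mem_nonunits_iff, hkey a₀ x hx] at ha
      rw [mem_nonunits_iff, hkey b₀ y hy] at hb
      have hsum : ¬ IsUnit (a₀ + b₀) :=
        mem_nonunits_iff.mp
          (IsLocalRing.nonunits_add (mem_nonunits_iff.mpr ha) (mem_nonunits_iff.mpr hb))
      have heq : (↑a₀ : A) + x + ((↑b₀ : A) + y) = ↑(a₀ + b₀) + (x + y) := by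
        push_cast; ring
      rw [mem_nonunits_iff, heq, hkey (a₀ + b₀) (x + y) (A₁.add_mem hx hy)]
      exact hsum
    refine ⟨hloc, ?_⟩
    haveI := hloc
    intro I hI
    rw [IsLocalRing.eq_maximalIdeal hI]
    ext z
    simp only [SetLike.mem_coe, IsLocalRing.mem_maximalIdeal, mem_nonunits_iff,
      Set.mem_setOf_eq]
    constructor
    · intro hz
      obtain ⟨a, x, hx, rfl⟩ := hdec z
      exact ⟨a, fun h => hz ((hkey a x hx).mpr h), x, hx, rfl⟩
    · rintro ⟨a, hna, x, hx, rfl⟩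
      exact fun h => hna ((hkey a x hx).mp h)
end

section
/- Let R be a commutative ring and M a free R-module admitting a basis with at least two elements. If φ : M × M → R is an R-bilinear map satisfying φ(x,y) = φ(y,x) for all x, y ∈ M and φ(x,y)·z = φ(y,z)·x for all x, y, z ∈ M, then φ = 0. -/
/-- Let `R` be a commutative ring and `M` a free `R`-module admitting a basis indexed by a
type with at least two elements. If `φ : M × M → R` is an `R`-bilinear map with
`φ(x,y) = φ(y,x)` and `φ(x,y)·z = φ(y,z)·x` for all `x, y, z ∈ M`, then `φ = 0`. -/
theorem bilinear_eq_zero_of_basis_two_le {R M : Type*} [CommRing R] [AddCommGroup M]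
    [Module R M] {ι : Type*} (b : Module.Basis ι R M) (hι : Nontrivial ι)
    (φ : M →ₗ[R] M →ₗ[R] R)
    (hsymm : ∀ x y : M, φ x y = φ y x)
    (hrel : ∀ x y z : M, φ x y • z = φ y z • x) :
    φ = 0 := by
  obtain ⟨i, j, hij⟩ := hι
  -- Step 1: φ (b j) y = 0 for all y
  have key : ∀ y : M, φ (b j) y = 0 := by
    intro y
    have h := hrel (b j) y (b i)
    have h2 := congrArg (fun m => b.repr m i) h
    simpa [Finsupp.single_apply, hij.symm] using h2
  -- Step 2: for all x y, φ x y = 0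
  ext x y
  have h := hrel x y (b j)
  rw [hsymm y (b j), key y, zero_smul] at h
  have h2 := congrArg (fun m => b.repr m j) h
  simpa [Finsupp.single_apply] using h2
end

section
/- Let R be a commutative Noetherian ring with total quotient ring Q(R), and let M be a finitely generated R-module such that Q(R) ⊗_R M is a free Q(R)-module of rank ℓ ≥ 2. If φ : M × M → R is an R-bilinear map satisfying φ(x,y) = φ(y,x) for all x, y ∈ M and φ(x,y)·z = φ(y,z)·x for all x, y, z ∈ M, then φ = 0. -/
open TensorProduct

/-- Let `R` be a commutative Noetherian ring with total quotient ring `Q(R)` (the fraction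
ring of `R`, i.e. the localization at the non-zerodivisors), and let `M` be a finitely
generated `R`-module such that `Q(R) ⊗[R] M` is a free `Q(R)`-module of rank `ℓ ≥ 2`.
If `φ : M × M → R` is an `R`-bilinear map with `φ(x,y) = φ(y,x)` and
`φ(x,y)·z = φ(y,z)·x` for all `x, y, z ∈ M`, then `φ = 0`. -/
theorem bilinear_eq_zero_of_rank_two_le {R : Type*} [CommRing R] [IsNoetherianRing R]
    {M : Type*} [AddCommGroup M] [Module R M] (hfg : Module.Finite R M)
    (ℓ : ℕ) (hℓ : 2 ≤ ℓ)
    (hfree : Module.Free (FractionRing R) (FractionRing R ⊗[R] M))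
    (hrank : Module.rank (FractionRing R) (FractionRing R ⊗[R] M) = ℓ)
    (φ : M →ₗ[R] M →ₗ[R] R)
    (hsymm : ∀ x y : M, φ x y = φ y x)
    (hrel : ∀ x y z : M, φ x y • z = φ y z • x) :
    φ = 0 := by
  classical
  rcases subsingleton_or_nontrivial R with hR | hR
  · ext x y; exact Subsingleton.elim _ _
  set Q := FractionRing R
  haveI : Nontrivial Q := inferInstance
  set ψ := LinearMap.BilinForm.baseChange Q φ with hψ
  -- moving an `R`-scalar inside a pure tensor
  have key2 : ∀ (r : R) (p q : Q) (m : M),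
      (r • p) • (q ⊗ₜ[R] m) = (p * q) • (((1:Q)) ⊗ₜ[R] (r • m)) := by
    intro r p q m
    rw [tmul_smul, smul_assoc, smul_comm (p * q) r]
    congr 1
    rw [smul_tmul', smul_tmul', smul_eq_mul, smul_eq_mul, mul_one]
  -- the relation for ψ
  have key : ∀ u v w : Q ⊗[R] M, ψ u v • w = ψ v w • u := by
    intro u v w
    induction u using TensorProduct.induction_on with
    | zero => simp
    | add u₁ u₂ h₁ h₂ => simp [map_add, add_smul, smul_add, h₁, h₂]
    | tmul a x =>
      induction v using TensorProduct.induction_on with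
      | zero => simp
      | add v₁ v₂ h₁ h₂ => simp [map_add, add_smul, smul_add, h₁, h₂]
      | tmul b y =>
        induction w using TensorProduct.induction_on with
        | zero => simp
        | add w₁ w₂ h₁ h₂ => simp [map_add, add_smul, smul_add, h₁, h₂]
        | tmul c z =>
          rw [hψ]
          rw [LinearMap.BilinForm.baseChange_tmul, LinearMap.BilinForm.baseChange_tmul]
          rw [key2, key2, hrel]
          congr 1
          ring
  -- a basis with at least two elements
  obtain ⟨ι, b⟩ := hfree.exists_basis
  have hcard : (2 : Cardinal) ≤ Cardinal.mk ι := by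
    rw [b.mk_eq_rank'', hrank]
    exact_mod_cast hℓ
  have : Nontrivial ι := by
    rw [← Cardinal.one_lt_iff_nontrivial]
    exact lt_of_lt_of_le (by norm_num) hcard
  -- ψ vanishes on basis vectors
  have hij : ∀ i j : ι, i ≠ j → ψ (b i) (b j) = 0 ∧ ψ (b i) (b i) = 0 := by
    intro i j hne
    have h := key (b i) (b i) (b j)
    have h1 := congrArg (fun t => b.repr t j) h
    have h2 := congrArg (fun t => b.repr t i) h
    simp [Finsupp.single_apply, hne, Ne.symm hne] at h1 h2
    exact ⟨h2.symm, h1⟩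
  have hb : ∀ i j : ι, ψ (b i) (b j) = 0 := by
    intro i j
    rcases eq_or_ne i j with rfl | hne
    · obtain ⟨k, hk⟩ := exists_ne i
      exact (hij i k (Ne.symm hk)).2
    · exact (hij i j hne).1
  have hψ0 : ψ = 0 := by
    apply b.ext; intro i; apply b.ext; intro j
    simpa using hb i j
  -- descend to φ
  ext x y
  have hz : ψ ((1:Q) ⊗ₜ[R] x) ((1:Q) ⊗ₜ[R] y) = 0 := by rw [hψ0]; simp
  rw [hψ, LinearMap.BilinForm.baseChange_tmul] at hz
  simp only [mul_one] at hz
  have hinj : Function.Injective (algebraMap R Q) := IsFractionRing.injective R Q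
  have hz' : algebraMap R Q (φ x y) = 0 := by
    rw [Algebra.algebraMap_eq_smul_one]; exact hz
  simpa using hinj (hz'.trans (map_zero _).symm)
end

section
/- Let R be a commutative Noetherian ring with total quotient ring Q(R), and let I be an ideal of R containing a non-zerodivisor of R such that Q(R) ⊗_R I is a free Q(R)-module of rank one. If φ : I × I → R is an R-bilinear map satisfying φ(x,y) = φ(y,x) for all x, y ∈ I and φ(x,y)·z = φ(y,z)·x for all x, y, z ∈ I, then there exists α ∈ Q(R) such that α·(image of I²) is contained in the canonical image of R in Q(R) and such that, for all x, y ∈ I, the image of φ(x,y) in Q(R) equals α times the images of x and y, i.e., φ(x,y)/1 = α·(x/1)·(y/1) in Q(R). -/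
open TensorProduct

/-- Let `R` be a commutative Noetherian ring with total quotient ring `Q(R)` (the fraction
ring of `R`), and let `I` be an ideal of `R` containing a non-zerodivisor such that
`Q(R) ⊗[R] I` is a free `Q(R)`-module of rank one. If `φ : I × I → R` is an `R`-bilinear
map with `φ(x,y) = φ(y,x)` and `φ(x,y)·z = φ(y,z)·x` for all `x, y, z ∈ I`, then there is
`α ∈ Q(R)` such that `α·(image of I²)` lies in the canonical image of `R` in `Q(R)` and
`φ(x,y)/1 = α·(x/1)·(y/1)` in `Q(R)` for all `x, y ∈ I`. -/
theorem bilinear_eq_smul_mul_of_rank_one {R : Type*} [CommRing R] [IsNoetherianRing R]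
    (I : Ideal R) (hnzd : ∃ r ∈ nonZeroDivisors R, r ∈ I)
    (hfree : Module.Free (FractionRing R) (FractionRing R ⊗[R] I))
    (hrank : Module.rank (FractionRing R) (FractionRing R ⊗[R] I) = 1)
    (φ : I →ₗ[R] I →ₗ[R] R)
    (hsymm : ∀ x y : I, φ x y = φ y x)
    (hrel : ∀ x y z : I, φ x y * (z : R) = φ y z * (x : R)) :
    ∃ α : FractionRing R,
      (∀ z ∈ I * I, α * algebraMap R (FractionRing R) z ∈ (algebraMap R (FractionRing R)).range) ∧
      (∀ x y : I, algebraMap R (FractionRing R) (φ x y) =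
        α * (algebraMap R (FractionRing R) (x : R) * algebraMap R (FractionRing R) (y : R))) := by
  obtain ⟨r, hrnzd, hrI⟩ := hnzd
  set f := algebraMap R (FractionRing R) with hf
  have hu : IsUnit (f (r * r)) :=
    IsLocalization.map_units (FractionRing R) (⟨r * r, mul_mem hrnzd hrnzd⟩ : nonZeroDivisors R)
  set rr : I := ⟨r, hrI⟩ with hrr
  refine ⟨(hu.unit⁻¹ : Units (FractionRing R)) * f (φ rr rr), ?_, ?_⟩
  · intro z hz
    refine Submodule.mul_induction_on hz ?_ ?_
    · intro x hx y hy
      have key : φ ⟨x, hx⟩ ⟨y, hy⟩ * (r * r) = φ rr rr * (x * y) := by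
        have h1 := hrel ⟨x, hx⟩ ⟨y, hy⟩ rr
        have h2 := hrel ⟨y, hy⟩ rr rr
        simp only [hrr] at h1 h2 ⊢
        calc φ ⟨x, hx⟩ ⟨y, hy⟩ * (r * r) = φ ⟨x, hx⟩ ⟨y, hy⟩ * r * r := by ring
        _ = φ ⟨y, hy⟩ ⟨r, hrI⟩ * x * r := by rw [h1]
        _ = φ ⟨y, hy⟩ ⟨r, hrI⟩ * r * x := by ring
        _ = φ ⟨r, hrI⟩ ⟨r, hrI⟩ * y * x := by rw [h2]
        _ = φ ⟨r, hrI⟩ ⟨r, hrI⟩ * (x * y) := by ring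
      refine ⟨φ ⟨x, hx⟩ ⟨y, hy⟩, ?_⟩
      have : f (φ ⟨x, hx⟩ ⟨y, hy⟩) * f (r * r) = f (φ rr rr) * f (x * y) := by
        rw [← map_mul, ← map_mul, key]
      have h3 : f (φ ⟨x, hx⟩ ⟨y, hy⟩) = (hu.unit⁻¹ : Units (FractionRing R)) *
          (f (φ rr rr) * f (x * y)) := by
        apply hu.mul_left_cancel
        rw [← mul_assoc, hu.mul_val_inv, one_mul, mul_comm, this]
      rw [h3]; ring
    · intro a b iha ihb
      obtain ⟨p, hp⟩ := iha
      obtain ⟨q, hq⟩ := ihb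
      exact ⟨p + q, by rw [map_add, map_add, mul_add, hp, hq]⟩
  · intro x y
    have h1 := hrel x y rr
    have h2 := hrel y rr rr
    have key : φ x y * (r * r) = φ rr rr * ((x : R) * (y : R)) := by
      simp only [hrr] at h1 h2 ⊢
      calc φ x y * (r * r) = φ x y * r * r := by ring
      _ = φ y ⟨r, hrI⟩ * x * r := by rw [h1]
      _ = φ y ⟨r, hrI⟩ * r * (x : R) := by ring
      _ = φ ⟨r, hrI⟩ ⟨r, hrI⟩ * y * (x : R) := by rw [h2]
      _ = φ ⟨r, hrI⟩ ⟨r, hrI⟩ * ((x : R) * (y : R)) := by ring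
    have h : f (φ x y) * f (r * r) = f (φ rr rr) * (f x * f y) := by
      rw [← map_mul, key, map_mul, map_mul]
    apply hu.mul_left_cancel
    have hcancel : (↑hu.unit⁻¹ : FractionRing R) * f (r * r) = 1 := hu.val_inv_mul
    linear_combination h - f (φ rr rr) * (f (x : R) * f (y : R)) * hcancel
end

section
/- Let A = A₀ ⊕ A₁ be a ℤ/2ℤ-graded commutative ring such that (R, m) := (A₀, m₀) is an Artinian local ring, M := A₁ is a nonzero finitely generated A₀-module, and x·y ∈ m for all x, y ∈ A₁, so that A is an Artinian local ring with maximal ideal n = m ⊕ A₁. Then ℓ_A((0) :_A n) = 1 (i.e., A is Gorenstein) if and only if either (i) M is a faithful R-module with ℓ_R((0) :_M m) = 1 (equivalently, M is a canonical module of R), or (ii) ℓ_R((0) :_R m) = 1 (i.e., R is Gorenstein) and {x ∈ A₁ | x·z = 0 for all z ∈ A₁} = 0. -/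
open IsLocalRing

/-- The length of an `R`-module `M`, realized as the Krull dimension of its lattice of
submodules (for modules of finite length this is the common length of all composition
series). -/
noncomputable def moduleLength (R M : Type*) [Semiring R] [AddCommMonoid M]
    [Module R M] : WithBot ℕ∞ :=
  Order.krullDim (Submodule R M)

lemma aux_krullDim_one_iff {α : Type*} [PartialOrder α] [BoundedOrder α] :
    Order.krullDim α = 1 ↔ IsSimpleOrder α := by
  constructor
  · intro h
    have hnt : Nontrivial α := by
      rw [← not_subsingleton_iff_nontrivial]
      intro hs
      have := Order.krullDim_nonpos_of_subsingleton (α := α)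
      rw [h] at this
      exact absurd this (by decide)
    refine ⟨fun x => ?_⟩
    by_contra hx
    push_neg at hx
    obtain ⟨h1, h2⟩ := hx
    have hb : (⊥ : α) < x := lt_of_le_of_ne bot_le (Ne.symm h1)
    have ht : x < (⊤ : α) := lt_of_le_of_ne le_top h2
    let p : LTSeries α := ((RelSeries.singleton _ (⊥ : α)).snoc x hb).snoc ⊤
      (by exact ht)
    have := Order.LTSeries.length_le_krullDim p
    rw [h] at this
    have hp : p.length = 2 := rfl
    rw [hp] at this
    exact absurd this (by decide)
  · intro h
    apply le_antisymm
    · refine iSup_le fun p => ?_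
      have hlen : p.length ≤ 1 := by
        by_contra h2
        push_neg at h2
        have h2 : 2 ≤ p.length := h2
        have h01 : p ⟨0, by omega⟩ < p ⟨1, by omega⟩ := p.strictMono (by simp [Fin.lt_def])
        have h12 : p ⟨1, by omega⟩ < p ⟨2, by omega⟩ := p.strictMono (by simp [Fin.lt_def])
        rcases h.eq_bot_or_eq_top (p ⟨1, by omega⟩) with hm | hm
        · rw [hm] at h01; exact not_lt_bot h01
        · rw [hm] at h12; exact not_top_lt h12
      have : ((p.length : ℕ∞) : WithBot ℕ∞) ≤ (((1:ℕ) : ℕ∞) : WithBot ℕ∞) := by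
        exact_mod_cast hlen
      simpa using this
    · let p : LTSeries α := (RelSeries.singleton _ (⊥ : α)).snoc ⊤ bot_lt_top
      have := Order.LTSeries.length_le_krullDim p
      exact le_trans (by rfl) this

lemma aux_moduleLength_eq_one_iff {S N : Type*} [Ring S] [AddCommGroup N] [Module S N] :
    moduleLength S N = 1 ↔
      ((∃ x : N, x ≠ 0) ∧ ∀ x y : N, x ≠ 0 → ∃ s : S, s • x = y) := by
  rw [moduleLength, aux_krullDim_one_iff]
  constructor
  · intro h
    have : IsSimpleModule S N := { toIsSimpleOrder := h }
    constructor
    · have hne : (⊤ : Submodule S N) ≠ ⊥ := Ne.symm bot_ne_top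
      obtain ⟨x, _, hx⟩ := Submodule.exists_mem_ne_zero_of_ne_bot hne
      exact ⟨x, hx⟩
    · intro x y hx
      have hsp : Submodule.span S {x} = ⊤ := by
        rcases this.eq_bot_or_eq_top (Submodule.span S {x}) with hb | ht
        · rw [Submodule.span_singleton_eq_bot] at hb; exact absurd hb hx
        · exact ht
      have : y ∈ Submodule.span S {x} := hsp ▸ Submodule.mem_top
      obtain ⟨s, hs⟩ := Submodule.mem_span_singleton.mp this
      exact ⟨s, hs⟩
  · rintro ⟨⟨x₀, hx₀⟩, hcyc⟩
    have hnt : Nontrivial (Submodule S N) := ⟨⊥, ⊤, fun h => (by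
        have hmem : (x₀ : N) ∈ (⊤ : Submodule S N) := Submodule.mem_top
        rw [← h] at hmem
        exact hx₀ hmem)⟩
    refine ⟨fun P => ?_⟩
    rcases eq_or_ne P ⊥ with hb | hb
    · exact Or.inl hb
    · refine Or.inr ?_
      obtain ⟨x, hxP, hx⟩ := Submodule.exists_mem_ne_zero_of_ne_bot hb
      rw [eq_top_iff]
      intro y _
      obtain ⟨s, hs⟩ := hcyc x y hx
      exact hs ▸ P.smul_mem s hxP

lemma aux_socle {S N : Type*} [CommRing S] [AddCommGroup N] [Module S N] (J : Ideal S)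
    {K : ℕ} (hJ : J ^ K = ⊥) {x : N} (hx : x ≠ 0) :
    ∃ s : S, s • x ≠ 0 ∧ ∀ γ ∈ J, γ • (s • x) = 0 := by
  have main : ∀ (k : ℕ) (x : N), x ≠ 0 → (∀ t ∈ J ^ k, t • x = 0) →
      ∃ s : S, s • x ≠ 0 ∧ ∀ γ ∈ J, γ • (s • x) = 0 := by
    intro k
    induction k with
    | zero => intro x hx h0
              exact absurd (by simpa using h0 1 (by simp)) hx
    | succ k ih =>
        intro x hx hk
        by_cases hall : ∀ t ∈ J ^ k, t • x = 0
        · exact ih x hx hall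
        · push_neg at hall
          obtain ⟨t, htm, htx⟩ := hall
          refine ⟨t, htx, fun γ hγ => ?_⟩
          rw [smul_smul]
          exact hk _ (by rw [pow_succ']; exact Ideal.mul_mem_mul hγ htm)
  refine main K x hx fun t ht => ?_
  rw [hJ] at ht
  simp [Ideal.mem_bot.mp ht]

set_option maxHeartbeats 1000000 in
set_option synthInstance.maxHeartbeats 400000 in
/-- Let `A = A₀ ⊕ A₁` be a `ℤ/2ℤ`-graded commutative ring (`A₀` a subring, `A₁` an
`A₀`-submodule, `A = A₀ ⊕ A₁` additively, `A₁·A₁ ⊆ A₀`) with `(R, m) := (A₀, m₀)` an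
Artinian local ring, `M := A₁` a nonzero finitely generated `A₀`-module, and `x·y ∈ m`
for all `x, y ∈ A₁`, so that `A` is an Artinian local ring with maximal ideal
`n = m ⊕ A₁`. Then `ℓ_A((0) :_A n) = 1` (i.e. `A` is Gorenstein) iff either
(i) `M` is a faithful `R`-module with `ℓ_R((0) :_M m) = 1` (i.e. `M` is a canonical module
of `R`), or (ii) `ℓ_R((0) :_R m) = 1` (i.e. `R` is Gorenstein) and
`{x ∈ A₁ | x·A₁ = 0} = 0`. -/
theorem gorenstein_iff_of_z2graded {A : Type*} [CommRing A]
    (A₀ : Subring A) (A₁ : Submodule A₀ A)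
    [IsArtinianRing A₀] [IsLocalRing A₀]
    (hgr : ∀ x ∈ A₁, ∀ y ∈ A₁, x * y ∈ A₀)
    (hdisj : A₀.toAddSubgroup ⊓ A₁.toAddSubgroup = ⊥)
    (hspan : A₀.toAddSubgroup ⊔ A₁.toAddSubgroup = ⊤)
    (hA₁ne : A₁ ≠ ⊥) (hA₁fg : A₁.FG)
    (hm : ∀ x ∈ A₁, ∀ y ∈ A₁, ∀ h : x * y ∈ A₀, (⟨x * y, h⟩ : A₀) ∈ maximalIdeal A₀)
    [IsArtinianRing A] [IsLocalRing A] :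
    moduleLength A (Submodule.torsionBySet A A ↑(maximalIdeal A)) = 1 ↔
      (((∀ a : A₀, (∀ x ∈ A₁, (a : A) * x = 0) → a = 0) ∧
          moduleLength A₀ (Submodule.torsionBySet A₀ A₁ ↑(maximalIdeal A₀)) = 1) ∨
        (moduleLength A₀ (Submodule.torsionBySet A₀ A₀ ↑(maximalIdeal A₀)) = 1 ∧
          ∀ x ∈ A₁, (∀ z ∈ A₁, x * z = 0) → x = 0)) := by
  set m := maximalIdeal A₀ with hm_def
  set n := maximalIdeal A with hn_def
  -- decomposition
  have hdec : ∀ x : A, ∃ (b : A₀) (c : A₁), (b : A) + (c : A) = x := by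
    intro x
    have : x ∈ A₀.toAddSubgroup ⊔ A₁.toAddSubgroup := hspan ▸ AddSubgroup.mem_top x
    rw [AddSubgroup.mem_sup] at this
    obtain ⟨y, hy, z, hz, hyz⟩ := this
    exact ⟨⟨y, hy⟩, ⟨z, hz⟩, hyz⟩
  choose p₀ p₁ hp using hdec
  have huniq : ∀ u v : A, u ∈ A₀ → v ∈ A₁ → u + v = 0 → u = 0 ∧ v = 0 := by
    intro u v hu hv huv
    have hu' : u ∈ A₀.toAddSubgroup ⊓ A₁.toAddSubgroup := by
      rw [AddSubgroup.mem_inf]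
      refine ⟨hu, ?_⟩
      have huv' : u = -v := by linear_combination huv
      rw [huv']
      exact A₁.toAddSubgroup.neg_mem hv
    rw [hdisj] at hu'
    have hu0 : u = 0 := hu'
    exact ⟨hu0, by linear_combination huv - hu0⟩
  -- nilpotency of maximal ideals
  obtain ⟨K₀, hK₀⟩ : IsNilpotent m := by
    rw [hm_def, ← IsLocalRing.jacobson_eq_maximalIdeal (⊥ : Ideal A₀) bot_ne_top]
    exact IsArtinianRing.isNilpotent_jacobson_bot
  obtain ⟨K, hK⟩ : IsNilpotent n := by
    rw [hn_def, ← IsLocalRing.jacobson_eq_maximalIdeal (⊥ : Ideal A) bot_ne_top]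
    exact IsArtinianRing.isNilpotent_jacobson_bot
  have hnil₀ : ∀ b : A₀, b ∈ m → IsNilpotent b := by
    intro b hb
    exact ⟨K₀, by have := Ideal.pow_mem_pow hb K₀; rw [hK₀] at this; exact this⟩
  have hniln : ∀ x : A, IsNilpotent x → x ∈ n := by
    intro x ⟨k, hk⟩
    rw [hn_def, IsLocalRing.mem_maximalIdeal, mem_nonunits_iff]
    intro hu
    have := hu.pow k
    rw [hk, isUnit_zero_iff] at this
    exact zero_ne_one this
  have hmn : ∀ b : A₀, b ∈ m → (b : A) ∈ n := by
    intro b hb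
    obtain ⟨k, hk⟩ := hnil₀ b hb
    exact hniln _ ⟨k, by rw [← A₀.coe_pow, hk, A₀.coe_zero]⟩
  have hA₁n : ∀ c ∈ A₁, (c : A) ∈ n := by
    intro c hc
    have hsq : c * c ∈ A₀ := hgr c hc c hc
    obtain ⟨k, hk⟩ := hnil₀ _ (hm c hc c hc hsq)
    refine hniln _ ⟨2 * k, ?_⟩
    have : ((⟨c * c, hsq⟩ : A₀) : A) ^ k = 0 := by rw [← A₀.coe_pow, hk, A₀.coe_zero]
    calc c ^ (2 * k) = (c * c) ^ k := by rw [pow_mul, sq]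
    _ = 0 := this
  have hnchar : ∀ x : A, x ∈ n ↔ p₀ x ∈ m := by
    intro x
    constructor
    · intro hx
      by_contra hpm
      have hu : IsUnit (p₀ x) := by
        by_contra hu
        exact hpm ((IsLocalRing.mem_maximalIdeal _).mpr hu)
      have hu' : IsUnit ((p₀ x : A)) := hu.map A₀.subtype
      have : ((p₀ x : A)) ∈ n := by
        have h1 : ((p₀ x : A)) = x - (p₁ x : A) := by linear_combination (hp x)
        rw [h1]
        exact Ideal.sub_mem _ hx (hA₁n _ (p₁ x).2)
      exact (Ideal.IsMaximal.ne_top (IsLocalRing.maximalIdeal.isMaximal A))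
        (Ideal.eq_top_of_isUnit_mem _ this hu')
    · intro hpm
      have h1 : (p₀ x : A) ∈ n := hmn _ hpm
      have h2 : (p₁ x : A) ∈ n := hA₁n _ (p₁ x).2
      have := Ideal.add_mem n h1 h2
      rwa [hp x] at this
  have hpid : ∀ x u v : A, u ∈ A₀ → v ∈ A₁ → u + v = x → (p₀ x : A) = u ∧ (p₁ x : A) = v := by
    intro x u v hu hv h
    have h0 : ((p₀ x : A) - u) + ((p₁ x : A) - v) = 0 := by linear_combination (hp x) - h
    have := huniq _ _ (A₀.sub_mem (p₀ x).2 hu) (A₁.sub_mem (p₁ x).2 hv) h0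
    constructor
    · linear_combination this.1
    · linear_combination this.2
  have hsoc_mem : ∀ x : A, x ∈ Submodule.torsionBySet A A ↑n ↔ ∀ a ∈ n, a * x = 0 := by
    intro x
    rw [Submodule.mem_torsionBySet_iff]
    constructor
    · intro h a ha
      have := h ⟨a, ha⟩
      simpa [smul_eq_mul] using this
    · intro h a
      simpa [smul_eq_mul] using h a.1 a.2
  have hsoc_char : ∀ x : A, (∀ a ∈ n, a * x = 0) ↔
      ((∀ β : A₀, β ∈ m → (β : A) * x = 0) ∧ (∀ c ∈ A₁, c * x = 0)) := by
    intro x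
    constructor
    · intro h
      exact ⟨fun β hβ => h _ (hmn β hβ), fun c hc => h _ (hA₁n c hc)⟩
    · rintro ⟨h₁, h₂⟩ a ha
      have : (p₀ a : A) * x + (p₁ a : A) * x = a * x := by linear_combination x * (hp a)
      rw [← this, h₁ _ ((hnchar a).mp ha), h₂ _ (p₁ a).2, add_zero]
  have hcomp : ∀ x : A, (∀ a ∈ n, a * x = 0) →
      ((∀ a ∈ n, a * (p₀ x : A) = 0) ∧ (∀ a ∈ n, a * (p₁ x : A) = 0)) := by
    intro x hx
    rw [hsoc_char] at hx
    obtain ⟨h₁, h₂⟩ := hx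
    have key₁ : ∀ β : A₀, β ∈ m → (β : A) * (p₀ x : A) = 0 ∧ (β : A) * (p₁ x : A) = 0 := by
      intro β hβ
      refine huniq _ _ (A₀.mul_mem β.2 (p₀ x).2) (A₁.smul_mem β (p₁ x).2) ?_
      have : (β : A) * (p₀ x : A) + (β : A) * (p₁ x : A) = (β : A) * x := by
        linear_combination (β : A) * (hp x)
      rw [this]
      exact h₁ β hβ
    have key₂ : ∀ c ∈ A₁, c * (p₀ x : A) = 0 ∧ c * (p₁ x : A) = 0 := by
      intro c hc
      have h' := huniq (c * (p₁ x : A)) (c * (p₀ x : A))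
        (hgr c hc _ (p₁ x).2) (by
          have := A₁.smul_mem (p₀ x) hc
          rwa [Subring.smul_def, smul_eq_mul, mul_comm] at this) ?_
      · exact ⟨h'.2, h'.1⟩
      · have : c * (p₁ x : A) + c * (p₀ x : A) = c * x := by linear_combination c * (hp x)
        rw [this]
        exact h₂ c hc
    constructor
    · rw [hsoc_char]
      exact ⟨fun β hβ => (key₁ β hβ).1, fun c hc => (key₂ c hc).1⟩
    · rw [hsoc_char]
      exact ⟨fun β hβ => (key₁ β hβ).2, fun c hc => (key₂ c hc).2⟩
  have hreduce : ∀ x : A, (∀ c ∈ A₁, c * x = 0) → ∀ a : A, a * x = (p₀ a : A) * x := by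
    intro x hx a
    have h1 : (p₁ a : A) * x = 0 := hx _ (p₁ a).2
    linear_combination x * (hp a).symm + h1
  -- membership lemmas for the three torsion modules
  have hmem0 : ∀ β : A₀, β ∈ Submodule.torsionBySet A₀ A₀ ↑m ↔ ∀ γ ∈ m, γ * β = 0 := by
    intro β
    rw [Submodule.mem_torsionBySet_iff]
    constructor
    · intro h γ hγ
      simpa [smul_eq_mul] using h ⟨γ, hγ⟩
    · intro h γ
      simpa [smul_eq_mul] using h γ.1 γ.2
  have hmem1 : ∀ x : A₁, x ∈ Submodule.torsionBySet A₀ A₁ ↑m ↔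
      ∀ γ : A₀, γ ∈ m → (γ : A) * (x : A) = 0 := by
    intro x
    rw [Submodule.mem_torsionBySet_iff]
    constructor
    · intro h γ hγ
      have h1 := h ⟨γ, hγ⟩
      have h2 := congrArg Subtype.val h1
      rw [Submodule.coe_smul] at h2
      rw [Subring.smul_def (S := A₀) γ (x : A), smul_eq_mul] at h2
      simpa using h2
    · intro h γ
      have hx := h γ.1 γ.2
      apply Subtype.ext
      rw [Submodule.coe_smul, Subring.smul_def (S := A₀) _ (x : A), smul_eq_mul]
      simpa using hx
  -- elementwise reformulations of the three moduleLength statements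
  have hL : moduleLength A (Submodule.torsionBySet A A ↑n) = 1 ↔
      ((∃ x : A, (∀ a ∈ n, a * x = 0) ∧ x ≠ 0) ∧
        ∀ x y : A, (∀ a ∈ n, a * x = 0) → (∀ a ∈ n, a * y = 0) → x ≠ 0 →
          ∃ a : A, a * x = y) := by
    rw [aux_moduleLength_eq_one_iff]
    constructor
    · rintro ⟨⟨x, hx⟩, hcyc⟩
      refine ⟨⟨x.1, (hsoc_mem _).mp x.2, fun h0 => hx (Subtype.ext h0)⟩, ?_⟩
      intro u v hu hv hune
      obtain ⟨s, hs⟩ := hcyc ⟨u, (hsoc_mem _).mpr hu⟩ ⟨v, (hsoc_mem _).mpr hv⟩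
        (fun h0 => hune (congrArg Subtype.val h0))
      refine ⟨s, ?_⟩
      have hs' := congrArg Subtype.val hs
      rwa [Submodule.coe_smul, smul_eq_mul] at hs'
    · rintro ⟨⟨x, hx, hxne⟩, hcyc⟩
      refine ⟨⟨⟨x, (hsoc_mem _).mpr hx⟩, fun h0 => hxne (congrArg Subtype.val h0)⟩, ?_⟩
      rintro ⟨u, hu⟩ ⟨v, hv⟩ hune
      obtain ⟨s, hs⟩ := hcyc u v ((hsoc_mem _).mp hu) ((hsoc_mem _).mp hv)
        (fun h0 => hune (Subtype.ext h0))
      refine ⟨s, Subtype.ext ?_⟩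
      rw [Submodule.coe_smul, smul_eq_mul]
      exact hs
  have hR0 : moduleLength A₀ (Submodule.torsionBySet A₀ A₀ ↑m) = 1 ↔
      ((∃ β : A₀, (∀ γ ∈ m, γ * β = 0) ∧ β ≠ 0) ∧
        ∀ β δ : A₀, (∀ γ ∈ m, γ * β = 0) → (∀ γ ∈ m, γ * δ = 0) → β ≠ 0 →
          ∃ γ : A₀, γ * β = δ) := by
    rw [aux_moduleLength_eq_one_iff]
    constructor
    · rintro ⟨⟨x, hx⟩, hcyc⟩
      refine ⟨⟨x.1, (hmem0 _).mp x.2, fun h0 => hx (Subtype.ext h0)⟩, ?_⟩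
      intro u v hu hv hune
      obtain ⟨s, hs⟩ := hcyc ⟨u, (hmem0 _).mpr hu⟩ ⟨v, (hmem0 _).mpr hv⟩
        (fun h0 => hune (congrArg Subtype.val h0))
      refine ⟨s, ?_⟩
      have hs' := congrArg Subtype.val hs
      rwa [Submodule.coe_smul, smul_eq_mul] at hs'
    · rintro ⟨⟨x, hx, hxne⟩, hcyc⟩
      refine ⟨⟨⟨x, (hmem0 _).mpr hx⟩, fun h0 => hxne (congrArg Subtype.val h0)⟩, ?_⟩
      rintro ⟨u, hu⟩ ⟨v, hv⟩ hune
      obtain ⟨s, hs⟩ := hcyc u v ((hmem0 _).mp hu) ((hmem0 _).mp hv)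
        (fun h0 => hune (Subtype.ext h0))
      refine ⟨s, Subtype.ext ?_⟩
      rw [Submodule.coe_smul, smul_eq_mul]
      exact hs
  have hR1 : moduleLength A₀ (Submodule.torsionBySet A₀ A₁ ↑m) = 1 ↔
      ((∃ x : A, x ∈ A₁ ∧ (∀ γ : A₀, γ ∈ m → (γ : A) * x = 0) ∧ x ≠ 0) ∧
        ∀ x y : A, x ∈ A₁ → y ∈ A₁ → (∀ γ : A₀, γ ∈ m → (γ : A) * x = 0) →
          (∀ γ : A₀, γ ∈ m → (γ : A) * y = 0) → x ≠ 0 → ∃ γ : A₀, (γ : A) * x = y) := by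
    rw [aux_moduleLength_eq_one_iff (N := ↥(Submodule.torsionBySet A₀ A₁ ↑m))]
    constructor
    · rintro ⟨⟨x, hx⟩, hcyc⟩
      refine ⟨⟨x.1.1, x.1.2, (hmem1 _).mp x.2, fun h0 => hx (Subtype.ext (Subtype.ext h0))⟩, ?_⟩
      intro u v hu hv hTu hTv hune
      obtain ⟨s, hs⟩ := hcyc ⟨⟨u, hu⟩, (hmem1 _).mpr hTu⟩ ⟨⟨v, hv⟩, (hmem1 _).mpr hTv⟩
        (fun h0 => hune (congrArg (fun z => z.1.1) h0))
      refine ⟨s, ?_⟩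
      have hs' := congrArg Subtype.val hs
      rw [Submodule.coe_smul] at hs'
      have hs'' := congrArg Subtype.val hs'
      rwa [Submodule.coe_smul, Subring.smul_def (S := A₀) s (u : A), smul_eq_mul] at hs''
    · rintro ⟨⟨x, hxA, hxT, hxne⟩, hcyc⟩
      refine ⟨⟨⟨⟨x, hxA⟩, (hmem1 _).mpr hxT⟩,
        fun h0 => hxne (congrArg (fun z => z.1.1) h0)⟩, ?_⟩
      rintro ⟨⟨u, hu⟩, hTu⟩ ⟨⟨v, hv⟩, hTv⟩ hune
      obtain ⟨s, hs⟩ := hcyc u v hu hv ((hmem1 _).mp hTu) ((hmem1 _).mp hTv)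
        (fun h0 => hune (Subtype.ext (Subtype.ext h0)))
      refine ⟨s, ?_⟩
      apply Subtype.ext
      apply Subtype.ext
      rw [Submodule.coe_smul, Submodule.coe_smul, Subring.smul_def (S := A₀) s (u : A),
        smul_eq_mul]
      exact hs
  -- structural lemmas used in both directions
  have hT1Z : (∀ a : A₀, (∀ x ∈ A₁, (a : A) * x = 0) → a = 0) →
      ∀ x : A, x ∈ A₁ → (∀ γ : A₀, γ ∈ m → (γ : A) * x = 0) →
      ∀ z ∈ A₁, z * x = 0 := by
    intro hfaith x hx hT z hz
    have hu : z * x ∈ A₀ := hgr z hz x hx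
    have hann : ∀ c ∈ A₁, ((⟨z * x, hu⟩ : A₀) : A) * c = 0 := by
      intro c hc
      have hzc : z * c ∈ A₀ := hgr z hz c hc
      have hzcm : (⟨z * c, hzc⟩ : A₀) ∈ m := hm z hz c hc hzc
      have := hT _ hzcm
      calc ((⟨z * x, hu⟩ : A₀) : A) * c = ((⟨z * c, hzc⟩ : A₀) : A) * x := by
            show (z * x) * c = (z * c) * x; ring
      _ = 0 := this
    have := hfaith _ hann
    have : ((⟨z * x, hu⟩ : A₀) : A) = 0 := by rw [this]; rfl
    exact this
  have hT0Ann : (∀ x ∈ A₁, (∀ z ∈ A₁, x * z = 0) → x = 0) →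
      ∀ β : A₀, (∀ γ ∈ m, γ * β = 0) → ∀ c ∈ A₁, c * (β : A) = 0 := by
    intro hZ β hT c hc
    have hv : c * (β : A) ∈ A₁ := by
      have := A₁.smul_mem β hc
      rwa [Subring.smul_def, smul_eq_mul, mul_comm] at this
    refine hZ _ hv ?_
    intro z hz
    have hzc : z * c ∈ A₀ := hgr z hz c hc
    have hzcm : (⟨z * c, hzc⟩ : A₀) ∈ m := hm z hz c hc hzc
    have h1 : (⟨z * c, hzc⟩ : A₀) * β = 0 := hT _ hzcm
    have h2 : ((⟨z * c, hzc⟩ : A₀) * β : A₀) = (0 : A₀) := h1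
    have h3 : (z * c) * (β : A) = 0 := by
      have := congrArg (fun t : A₀ => (t : A)) h2
      simpa using this
    calc (c * (β : A)) * z = (z * c) * (β : A) := by ring
    _ = 0 := h3
  rw [hL, hR1, hR0]
  have hpow₀ : m ^ K₀ = ⊥ := by rw [hK₀]; rfl
  constructor
  · rintro ⟨⟨w, hw, hwne⟩, hcyc⟩
    by_cases hcase : ∃ c : A, c ∈ A₁ ∧ (∀ a ∈ n, a * c = 0) ∧ c ≠ 0
    · -- case (i): there is a nonzero socle element inside A₁
      obtain ⟨c, hcA, hcsoc, hcne⟩ := hcase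
      have hfaith : ∀ a : A₀, (∀ x ∈ A₁, (a : A) * x = 0) → a = 0 := by
        intro β hβ
        by_contra hβne
        obtain ⟨s, hsne, hskill⟩ := aux_socle (S := A₀) (N := A₀) m (K := K₀) hpow₀ hβne
        rw [smul_eq_mul] at hsne
        have hβ'T : ∀ γ ∈ m, γ * (s * β) = 0 := by
          intro γ hγ
          have h1 := hskill γ hγ
          rwa [smul_eq_mul, smul_eq_mul] at h1
        have hβ'ann : ∀ c' ∈ A₁, ((s * β : A₀) : A) * c' = 0 := by
          intro c' hc'
          have hcoe : ((s * β : A₀) : A) = (s : A) * (β : A) := rfl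
          rw [hcoe, mul_assoc, hβ c' hc', mul_zero]
        have hβ'soc : ∀ a ∈ n, a * ((s * β : A₀) : A) = 0 := by
          rw [hsoc_char]
          constructor
          · intro γ hγ
            exact congrArg Subtype.val (hβ'T γ hγ)
          · intro c' hc'
            rw [mul_comm]
            exact hβ'ann c' hc'
        have hβ'ne : ((s * β : A₀) : A) ≠ 0 := fun h0 => hsne (Subtype.ext h0)
        obtain ⟨a, ha⟩ := hcyc _ c hβ'soc hcsoc hβ'ne
        have hkill : ∀ z ∈ A₁, z * ((s * β : A₀) : A) = 0 := by
          intro z hz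
          rw [mul_comm]
          exact hβ'ann z hz
        have hc0 : c = (p₀ a : A) * ((s * β : A₀) : A) := by
          rw [← ha]
          exact hreduce _ hkill a
        have hcA0 : c ∈ A₀ := by
          rw [hc0]
          exact A₀.mul_mem (p₀ a).2 (s * β).2
        have := huniq c (-c) hcA0 (A₁.neg_mem hcA) (by ring)
        exact hcne this.1
      refine Or.inl ⟨hfaith, ⟨⟨c, hcA, ((hsoc_char c).mp hcsoc).1, hcne⟩, ?_⟩⟩
      intro x y hxA hyA hTx hTy hxne
      have hZx : ∀ z ∈ A₁, z * x = 0 := hT1Z hfaith x hxA hTx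
      have hZy : ∀ z ∈ A₁, z * y = 0 := hT1Z hfaith y hyA hTy
      have hxsoc : ∀ a ∈ n, a * x = 0 := (hsoc_char x).mpr ⟨hTx, hZx⟩
      have hysoc : ∀ a ∈ n, a * y = 0 := (hsoc_char y).mpr ⟨hTy, hZy⟩
      obtain ⟨a, ha⟩ := hcyc x y hxsoc hysoc hxne
      refine ⟨p₀ a, ?_⟩
      rw [← hreduce x hZx a]
      exact ha
    · -- case (ii): no nonzero socle element inside A₁
      have hnosoc1 : ∀ c : A, c ∈ A₁ → (∀ a ∈ n, a * c = 0) → c = 0 := by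
        intro c h1 h2
        by_contra h3
        exact hcase ⟨c, h1, h2, h3⟩
      have hZcond : ∀ x ∈ A₁, (∀ z ∈ A₁, x * z = 0) → x = 0 := by
        intro x hx hZ
        by_contra hxne
        obtain ⟨s, hsne, hskill⟩ := aux_socle (S := A₀) (N := A) m (K := K₀) hpow₀ hxne
        have hsx : s • x = (s : A) * x := by rw [Subring.smul_def, smul_eq_mul]
        have h1 : (s : A) * x ∈ A₁ := by
          have := A₁.smul_mem s hx
          rwa [Subring.smul_def, smul_eq_mul] at this
        have h2 : ∀ a ∈ n, a * ((s : A) * x) = 0 := by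
          rw [hsoc_char]
          constructor
          · intro γ hγ
            have h3 := hskill γ hγ
            rwa [hsx, Subring.smul_def, smul_eq_mul] at h3
          · intro z hz
            calc z * ((s : A) * x) = (s : A) * (x * z) := by ring
            _ = 0 := by rw [hZ z hz, mul_zero]
        have h4 := hnosoc1 _ h1 h2
        rw [← hsx] at h4
        exact hsne h4
      have hwp₁ : (p₁ w : A) = 0 := hnosoc1 _ (p₁ w).2 ((hcomp w hw).2)
      have hwp₀ : (p₀ w : A) = w := by
        have h5 := hp w
        rwa [hwp₁, add_zero] at h5
      have hwp₀ne : p₀ w ≠ 0 := by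
        intro h0
        apply hwne
        rw [← hwp₀, h0]
        rfl
      have hT0w : ∀ γ ∈ m, γ * (p₀ w) = 0 := by
        intro γ hγ
        exact Subtype.ext ((hcomp w hw).1 _ (hmn γ hγ))
      refine Or.inr ⟨⟨⟨p₀ w, hT0w, hwp₀ne⟩, ?_⟩, hZcond⟩
      intro β δ hTβ hTδ hβne
      have hAnnβ : ∀ c ∈ A₁, c * (β : A) = 0 := hT0Ann hZcond β hTβ
      have hAnnδ : ∀ c ∈ A₁, c * (δ : A) = 0 := hT0Ann hZcond δ hTδ
      have hβsoc : ∀ a ∈ n, a * (β : A) = 0 :=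
        (hsoc_char _).mpr ⟨fun γ hγ => congrArg Subtype.val (hTβ γ hγ), hAnnβ⟩
      have hδsoc : ∀ a ∈ n, a * (δ : A) = 0 :=
        (hsoc_char _).mpr ⟨fun γ hγ => congrArg Subtype.val (hTδ γ hγ), hAnnδ⟩
      obtain ⟨a, ha⟩ := hcyc (β : A) (δ : A) hβsoc hδsoc (fun h0 => hβne (Subtype.ext h0))
      refine ⟨p₀ a, Subtype.ext ?_⟩
      calc ((p₀ a * β : A₀) : A) = (p₀ a : A) * (β : A) := rfl
      _ = a * (β : A) := (hreduce (β : A) hAnnβ a).symm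
      _ = (δ : A) := ha
  · rintro (⟨hfaith, ⟨⟨c, hcA, hcT, hcne⟩, hcyc1⟩⟩ | ⟨⟨⟨β₀, hβ₀T, hβ₀ne⟩, hcyc0⟩, hZ⟩)
    · -- case (i)
      have hsocA1 : ∀ x : A, (∀ a ∈ n, a * x = 0) → x ∈ A₁ := by
        intro x hx
        have h1 := (hcomp x hx).1
        rw [hsoc_char] at h1
        have hann : ∀ x' ∈ A₁, ((p₀ x : A)) * x' = 0 := by
          intro x' hx'
          rw [mul_comm]
          exact h1.2 x' hx'
        have hp₀0 : p₀ x = 0 := hfaith _ hann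
        have hp₀0' : (p₀ x : A) = 0 := by rw [hp₀0]; rfl
        have h2 := hp x
        rw [hp₀0', zero_add] at h2
        rw [← h2]
        exact (p₁ x).2
      constructor
      · refine ⟨c, ?_, hcne⟩
        rw [hsoc_char]
        exact ⟨hcT, hT1Z hfaith c hcA hcT⟩
      · intro x y hx hy hxne
        have hxA := hsocA1 x hx
        have hyA := hsocA1 y hy
        have hTx : ∀ γ : A₀, γ ∈ m → (γ : A) * x = 0 := ((hsoc_char x).mp hx).1
        have hTy : ∀ γ : A₀, γ ∈ m → (γ : A) * y = 0 := ((hsoc_char y).mp hy).1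
        obtain ⟨γ, hγ⟩ := hcyc1 x y hxA hyA hTx hTy hxne
        exact ⟨(γ : A), hγ⟩
    · -- case (ii)
      have hsocA0 : ∀ x : A, (∀ a ∈ n, a * x = 0) → (p₁ x : A) = 0 := by
        intro x hx
        have h2 := (hcomp x hx).2
        rw [hsoc_char] at h2
        refine hZ _ (p₁ x).2 ?_
        intro z hz
        rw [mul_comm]
        exact h2.2 z hz
      constructor
      · refine ⟨(β₀ : A), ?_, fun h0 => hβ₀ne (Subtype.ext h0)⟩
        rw [hsoc_char]
        exact ⟨fun γ hγ => congrArg Subtype.val (hβ₀T γ hγ), hT0Ann hZ β₀ hβ₀T⟩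
      · intro x y hx hy hxne
        have hxval : x = (p₀ x : A) := by
          have h5 := hp x
          rw [hsocA0 x hx, add_zero] at h5
          exact h5.symm
        have hyval : y = (p₀ y : A) := by
          have h5 := hp y
          rw [hsocA0 y hy, add_zero] at h5
          exact h5.symm
        have hT0x : ∀ γ ∈ m, γ * (p₀ x) = 0 := by
          intro γ hγ
          apply Subtype.ext
          show (γ : A) * (p₀ x : A) = 0
          rw [← hxval]
          exact ((hsoc_char x).mp hx).1 γ hγ
        have hT0y : ∀ γ ∈ m, γ * (p₀ y) = 0 := by
          intro γ hγ
          apply Subtype.ext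
          show (γ : A) * (p₀ y : A) = 0
          rw [← hyval]
          exact ((hsoc_char y).mp hy).1 γ hγ
        have hp₀xne : p₀ x ≠ 0 := by
          intro h0
          apply hxne
          rw [hxval, h0]
          rfl
        obtain ⟨γ, hγ⟩ := hcyc0 (p₀ x) (p₀ y) hT0x hT0y hp₀xne
        refine ⟨(γ : A), ?_⟩
        rw [hxval, hyval]
        exact congrArg Subtype.val hγ
end

section
/- Let A = A₀ ⊕ A₁ be a ℤ/2ℤ-graded commutative ring such that (A₀, m₀) is a Noetherian local ring, A₁ is a nonzero finitely generated A₀-module, and x·y ∈ m₀ for all x, y ∈ A₁, so that A is a Noetherian local ring with maximal ideal n = m₀ ⊕ A₁. Let q be the ideal of A₀ generated by all products x·y with x, y ∈ A₁. Then the embedding dimension of A satisfies v(A) = μ_{A₀}(m₀/q) + μ_{A₀}(A₁), i.e., dim_{A₀/m₀}(n/n²) = dim_{A₀/m₀}(m₀/(m₀² + q)) + dim_{A₀/m₀}(A₁/m₀A₁). -/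
open IsLocalRing

/-- The minimal number of generators `μ_R(M)` of an `R`-module `M`: the least cardinality
of a finite generating set. -/
noncomputable def minGen (R M : Type*) [Semiring R] [AddCommMonoid M] [Module R M] : ℕ :=
  sInf {n : ℕ | ∃ s : Finset M, s.card = n ∧ Submodule.span R (s : Set M) = ⊤}

lemma minGen_le {R M : Type*} [Semiring R] [AddCommMonoid M] [Module R M]
    (s : Finset M) (h : Submodule.span R (s : Set M) = ⊤) : minGen R M ≤ s.card :=
  Nat.sInf_le ⟨s, rfl, h⟩

lemma exists_minGen (R M : Type*) [Semiring R] [AddCommMonoid M] [Module R M]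
    [Module.Finite R M] :
    ∃ s : Finset M, s.card = minGen R M ∧ Submodule.span R (s : Set M) = ⊤ := by
  obtain ⟨s, hs⟩ := Module.Finite.fg_top (R := R) (M := M)
  have hne : {n : ℕ | ∃ s : Finset M, s.card = n ∧
      Submodule.span R (s : Set M) = ⊤}.Nonempty := ⟨s.card, s, rfl, hs⟩
  exact Nat.sInf_mem hne

lemma finrank_le_of_span_finset {K V : Type*} [Field K] [AddCommGroup V] [Module K V]
    (s : Finset V) (h : Submodule.span K (s : Set V) = ⊤) : Module.finrank K V ≤ s.card := by
  classical
  have := finrank_span_finset_le_card (R := K) (M := V) s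
  rw [Set.finrank, h, finrank_top] at this
  exact this

instance quotModuleResidue (R M : Type*) [CommRing R] [IsLocalRing R] [AddCommGroup M]
    [Module R M] : Module (ResidueField R) (M ⧸ (maximalIdeal R • ⊤ : Submodule R M)) :=
  inferInstanceAs (Module (R ⧸ maximalIdeal R) (M ⧸ (maximalIdeal R • ⊤ : Submodule R M)))

instance quotTowerResidue (R M : Type*) [CommRing R] [IsLocalRing R] [AddCommGroup M]
    [Module R M] : IsScalarTower R (ResidueField R) (M ⧸ (maximalIdeal R • ⊤ : Submodule R M)) :=
  inferInstanceAs
    (IsScalarTower R (R ⧸ maximalIdeal R) (M ⧸ (maximalIdeal R • ⊤ : Submodule R M)))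

lemma minGen_le_finrank (R M : Type*) [CommRing R] [IsLocalRing R] [AddCommGroup M]
    [Module R M] [Module.Finite R M] :
    minGen R M ≤ Module.finrank (ResidueField R)
      (M ⧸ (maximalIdeal R • ⊤ : Submodule R M)) := by
  classical
  set k := ResidueField R with hk
  set V := M ⧸ (maximalIdeal R • ⊤ : Submodule R M)
  haveI : Module.Finite k V := Module.Finite.of_restrictScalars_finite R k V
  let b : Module.Basis (Fin (Module.finrank k V)) k V := Module.finBasis k V
  have hsur := Submodule.Quotient.mk_surjective (maximalIdeal R • ⊤ : Submodule R M)
  choose f hf using fun i => hsur (b i)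
  let s : Finset M := Finset.image f Finset.univ
  have hcard : s.card ≤ Module.finrank k V := Finset.card_image_le.trans (by simp)
  have hspan : Submodule.span R (s : Set M) = ⊤ := by
    rw [← IsLocalRing.map_mkQ_eq_top, Submodule.map_span]
    have himg : Submodule.mkQ (maximalIdeal R • ⊤ : Submodule R M) '' (s : Set M) ⊇
        Set.range b := by
      rintro _ ⟨i, rfl⟩
      exact ⟨f i, by simp [s], hf i⟩
    have : Submodule.span k
        (Submodule.mkQ (maximalIdeal R • ⊤ : Submodule R M) '' (s : Set M)) = ⊤ := by
      apply eq_top_iff.2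
      rw [← b.span_eq]
      exact le_trans (Submodule.span_mono himg) le_rfl
    rw [← Submodule.restrictScalars_span R k Ideal.Quotient.mk_surjective, this]
    rfl
  exact (minGen_le s hspan).trans hcard

set_option maxHeartbeats 3000000 in
set_option synthInstance.maxHeartbeats 1000000 in
/-- Let `A = A₀ ⊕ A₁` be a `ℤ/2ℤ`-graded commutative ring (`A₀` a subring, `A₁` an
`A₀`-submodule, `A = A₀ ⊕ A₁` additively, `A₁·A₁ ⊆ A₀`) with `(A₀, m₀)` a Noetherian
local ring, `A₁` a nonzero finitely generated `A₀`-module, and `x·y ∈ m₀` for all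
`x, y ∈ A₁`, so that `A` is a Noetherian local ring with maximal ideal `n = m₀ ⊕ A₁`.
Let `q ⊆ A₀` be the ideal generated by all products `x·y` with `x, y ∈ A₁`. Then the
embedding dimension of `A` satisfies `v(A) = μ_{A₀}(m₀/q) + μ_{A₀}(A₁)`. -/
theorem embdim_eq_of_z2graded {A : Type*} [CommRing A]
    (A₀ : Subring A) (A₁ : Submodule A₀ A)
    [IsNoetherianRing A₀] [IsLocalRing A₀]
    (hgr : ∀ x ∈ A₁, ∀ y ∈ A₁, x * y ∈ A₀)
    (hdisj : A₀.toAddSubgroup ⊓ A₁.toAddSubgroup = ⊥)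
    (hspan : A₀.toAddSubgroup ⊔ A₁.toAddSubgroup = ⊤)
    (hA₁ne : A₁ ≠ ⊥) (hA₁fg : A₁.FG)
    (hm : ∀ x ∈ A₁, ∀ y ∈ A₁, ∀ h : x * y ∈ A₀, (⟨x * y, h⟩ : A₀) ∈ maximalIdeal A₀)
    [IsNoetherianRing A] [IsLocalRing A] :
    minGen A (maximalIdeal A) =
      minGen A₀ (↥(maximalIdeal A₀) ⧸ Submodule.comap (maximalIdeal A₀).subtype
          (Ideal.span {a : A₀ | ∃ x ∈ A₁, ∃ y ∈ A₁, (a : A) = x * y})) +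
        minGen A₀ A₁ := by
  classical
  -- basic decomposition
  have hdec : ∀ z : A, ∃ x : A₀, ∃ y ∈ A₁, z = ↑x + y := by
    intro z
    have : z ∈ A₀.toAddSubgroup ⊔ A₁.toAddSubgroup := hspan ▸ AddSubgroup.mem_top z
    obtain ⟨x, hx, y, hy, rfl⟩ := AddSubgroup.mem_sup.mp this
    exact ⟨⟨x, hx⟩, y, hy, rfl⟩
  have huniq : ∀ (x x' : A₀), ∀ y ∈ A₁, ∀ y' ∈ A₁,
      (↑x + y : A) = ↑x' + y' → x = x' ∧ y = y' := by
    intro x x' y hy y' hy' h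
    have h1 : (↑x - ↑x' : A) = y' - y := by linear_combination h
    have h2 : (↑x - ↑x' : A) ∈ A₀.toAddSubgroup ⊓ A₁.toAddSubgroup :=
      AddSubgroup.mem_inf.mpr ⟨sub_mem x.2 x'.2, by rw [h1]; exact sub_mem hy' hy⟩
    rw [hdisj] at h2
    have h3 : (↑x : A) = ↑x' := by
      have := (AddSubgroup.mem_bot).mp h2
      linear_combination this
    have h4 : y = y' := by
      have := (AddSubgroup.mem_bot).mp h2
      rw [h1] at this
      linear_combination -this
    exact ⟨Subtype.ext h3, h4⟩
  set m₀ := maximalIdeal A₀ with hm₀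
  -- the candidate maximal ideal
  set N : Ideal A :=
    { carrier := {z : A | ∃ m ∈ m₀, ∃ y ∈ A₁, z = ↑m + y}
      add_mem' := by
        rintro a b ⟨ma, hma, ya, hya, rfl⟩ ⟨mb, hmb, yb, hyb, rfl⟩
        exact ⟨ma + mb, add_mem hma hmb, ya + yb, add_mem hya hyb, by push_cast; ring⟩
      zero_mem' := ⟨0, zero_mem _, 0, zero_mem _, by push_cast; ring⟩
      smul_mem' := by
        rintro a z ⟨mz, hmz, yz, hyz, rfl⟩
        obtain ⟨a₀, a₁, ha₁, rfl⟩ := hdec a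
        have h1 : a₁ * yz ∈ A₀ := hgr a₁ ha₁ yz hyz
        refine ⟨a₀ * mz + ⟨a₁ * yz, h1⟩, add_mem (Ideal.mul_mem_left _ _ hmz)
          (hm a₁ ha₁ yz hyz h1), a₀ • yz + mz • a₁, add_mem (A₁.smul_mem _ hyz)
          (A₁.smul_mem _ ha₁), ?_⟩
        show (↑a₀ + a₁) * (↑mz + yz) = _
        push_cast
        show _ = ↑a₀ * ↑mz + ↑a₁ * yz + (↑a₀ * yz + ↑mz * a₁)
        ring } with hNdef
  have hmemN : ∀ z : A, z ∈ N ↔ ∃ m ∈ m₀, ∃ y ∈ A₁, z = ↑m + y := fun z => Iff.rfl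
  have hNle : N ≤ maximalIdeal A := by
    intro z hz
    rw [IsLocalRing.mem_maximalIdeal]
    intro hu
    have h1 : (1 : A) ∈ N := by
      obtain ⟨u, rfl⟩ := hu
      have := N.mul_mem_right (↑u⁻¹ : A) hz
      rwa [Units.mul_inv] at this
    obtain ⟨m, hmm, y, hy, h1⟩ := h1
    have := huniq m 1 y hy 0 (zero_mem _) (by rw [← h1]; push_cast; ring)
    rcases this with ⟨hm1, -⟩
    rw [hm1] at hmm
    exact (IsLocalRing.mem_maximalIdeal (1 : A₀)).mp hmm isUnit_one
  have hN : maximalIdeal A = N := by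
    refine le_antisymm ?_ hNle
    intro z hz
    obtain ⟨x, y, hy, rfl⟩ := hdec z
    by_cases hx : x ∈ m₀
    · exact ⟨x, hx, y, hy, rfl⟩
    · exfalso
      have hux : IsUnit x := by
        by_contra h
        exact hx ((IsLocalRing.mem_maximalIdeal x).mpr h)
      obtain ⟨u, rfl⟩ := hux
      set w : A := (↑u⁻¹ : A₀) • y with hw
      have hwA₁ : w ∈ A₁ := A₁.smul_mem _ hy
      have hww : w * w ∈ A₀ := hgr w hwA₁ w hwA₁
      have hwwm : (⟨w * w, hww⟩ : A₀) ∈ m₀ := hm w hwA₁ w hwA₁ hww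
      have hu1w : IsUnit ((1 : A) + w) := by
        have h2 : IsUnit (1 - (⟨w * w, hww⟩ : A₀)) :=
          IsLocalRing.isUnit_one_sub_self_of_mem_nonunits _ hwwm
        have h3 : IsUnit ((↑(1 - (⟨w * w, hww⟩ : A₀)) : A)) := h2.map A₀.subtype
        have h4 : ((1 : A) + w) * ((1 : A) - w) = ↑(1 - (⟨w * w, hww⟩ : A₀)) := by
          push_cast
          ring
        exact isUnit_of_mul_isUnit_left (h4 ▸ h3)
      have hz' : (↑(↑u : A₀) + y : A) = ↑(↑u : A₀) * (1 + w) := by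
        rw [hw]
        have : (↑(↑u : A₀) : A) * ((↑(↑u⁻¹ : A₀) : A) * y) = y := by
          rw [← mul_assoc, ← A₀.coe_mul, u.mul_inv]
          simp
        show _ = _ * (1 + (↑(↑u⁻¹ : A₀) : A) * y)
        rw [mul_add, mul_one, this]
      have : IsUnit (↑(↑u : A₀) + y : A) := by
        rw [hz']
        exact (u.isUnit.map A₀.subtype).mul hu1w
      exact (IsLocalRing.mem_maximalIdeal _).mp hz this
  set qset : Set A₀ := {a : A₀ | ∃ x ∈ A₁, ∃ y ∈ A₁, (a : A) = x * y} with hqsetdef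
  set q : Ideal A₀ := Ideal.span qset with hqdef
  set Q : Submodule A₀ ↥m₀ := Submodule.comap m₀.subtype q with hQdef
  haveI hfinm₀ : Module.Finite A₀ ↥m₀ := Module.Finite.iff_fg.mpr (IsNoetherian.noetherian m₀)
  haveI hfinM₁ : Module.Finite A₀ (↥m₀ ⧸ Q) :=
    Module.Finite.of_surjective Q.mkQ (Submodule.mkQ_surjective Q)
  haveI hfinA₁ : Module.Finite A₀ ↥A₁ := Module.Finite.iff_fg.mpr hA₁fg
  haveI hfinn : Module.Finite A ↥(maximalIdeal A) :=
    Module.Finite.iff_fg.mpr (IsNoetherian.noetherian (maximalIdeal A))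
  -- generic coercion lemma for spans over A₀
  have hcoe : ∀ (X : Set A₀) (b : A₀), b ∈ Submodule.span A₀ X →
      (↑b : A) ∈ Submodule.span A ((fun c : A₀ => (↑c : A)) '' X) := by
    intro X b hb
    refine Submodule.span_induction ?_ ?_ ?_ ?_ hb
    · intro x hx
      exact Submodule.subset_span ⟨x, hx, rfl⟩
    · simp
    · intro x y _ _ hx hy
      push_cast
      exact Submodule.add_mem _ hx hy
    · intro c x _ hx
      have : ((c • x : A₀) : A) = (↑c : A) • (↑x : A) := rfl
      rw [this]
      exact Submodule.smul_mem _ _ hx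
  -- everything of A₁ is in the A-span of (coe '' u) for u spanning A₁
  have hA₁span : ∀ (u : Finset ↥A₁), Submodule.span A₀ (u : Set ↥A₁) = ⊤ →
      ∀ y ∈ A₁, y ∈ Submodule.span A ((fun v : ↥A₁ => (↑v : A)) '' (u : Set ↥A₁)) := by
    intro u hu y hy
    have h1 : (⟨y, hy⟩ : ↥A₁) ∈ Submodule.span A₀ (u : Set ↥A₁) := hu ▸ trivial
    have h2 : y ∈ Submodule.map A₁.subtype (Submodule.span A₀ (u : Set ↥A₁)) :=
      ⟨⟨y, hy⟩, h1, rfl⟩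
    rw [Submodule.map_span] at h2
    have h3 := Submodule.span_le_restrictScalars A₀ A
      ((fun v : ↥A₁ => (↑v : A)) '' (u : Set ↥A₁))
    exact h3 h2
  -- elements of q, coerced, lie in any A-span containing A₁
  have hqle : ∀ (U : Set A), (∀ y ∈ A₁, y ∈ Submodule.span A U) →
      ∀ b ∈ q, (↑b : A) ∈ Submodule.span A U := by
    intro U hU b hb
    refine Submodule.span_induction ?_ ?_ ?_ ?_ hb
    · rintro a ⟨x, hx, y, hy, hxy⟩
      rw [hxy]
      have := Submodule.smul_mem (Submodule.span A U) x (hU y hy)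
      rwa [smul_eq_mul] at this
    · simp
    · intro x y _ _ hx hy
      push_cast
      exact Submodule.add_mem _ hx hy
    · intro c x _ hx
      have : ((c • x : A₀) : A) = (↑c : A) • (↑x : A) := rfl
      rw [this]
      exact Submodule.smul_mem _ _ hx
  -- upper bound
  obtain ⟨s₁, hs₁card, hs₁span⟩ := exists_minGen A₀ (↥m₀ ⧸ Q)
  obtain ⟨s₂, hs₂card, hs₂span⟩ := exists_minGen A₀ ↥A₁
  choose g hg using Submodule.mkQ_surjective Q
  have hf₁mem : ∀ m : ↥m₀, (↑↑m : A) ∈ maximalIdeal A := by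
    intro m
    rw [hN]
    exact ⟨↑m, m.2, 0, zero_mem _, by simp⟩
  have hf₂mem : ∀ y : ↥A₁, (↑y : A) ∈ maximalIdeal A := by
    intro y
    rw [hN]
    exact ⟨0, zero_mem _, ↑y, y.2, by simp⟩
  set f₁ : ↥m₀ → ↥(maximalIdeal A) := fun m => ⟨↑↑m, hf₁mem m⟩ with hf₁def
  set f₂ : ↥A₁ → ↥(maximalIdeal A) := fun y => ⟨↑y, hf₂mem y⟩ with hf₂def
  set S : Finset ↥(maximalIdeal A) := (s₁.image (f₁ ∘ g)) ∪ (s₂.image f₂) with hSdef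
  have hScard : S.card ≤ s₁.card + s₂.card :=
    (Finset.card_union_le _ _).trans (add_le_add Finset.card_image_le Finset.card_image_le)
  set U : Set A := (fun v : ↥(maximalIdeal A) => (↑v : A)) '' (S : Set ↥(maximalIdeal A))
    with hUdef
  have hs₂sub : (fun v : ↥A₁ => (↑v : A)) '' (s₂ : Set ↥A₁) ⊆ U := by
    rintro _ ⟨v, hv, rfl⟩
    refine ⟨f₂ v, ?_, rfl⟩
    exact Finset.mem_coe.mpr
      (Finset.mem_union_right _ (Finset.mem_image_of_mem f₂ (Finset.mem_coe.mp hv)))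
  have hA₁U : ∀ y ∈ A₁, y ∈ Submodule.span A U := by
    intro y hy
    exact Submodule.span_mono hs₂sub (hA₁span s₂ hs₂span y hy)
  have hUspan : Submodule.span A U = maximalIdeal A := by
    apply le_antisymm
    · rw [Submodule.span_le]
      rintro _ ⟨v, _, rfl⟩
      exact v.2
    · intro z hz
      rw [hN] at hz
      obtain ⟨m, hmm, y, hy, rfl⟩ := hz
      refine Submodule.add_mem _ ?_ (hA₁U y hy)
      -- m ∈ span t₁ ⊔ Q
      have h1 : Q.mkQ ⟨m, hmm⟩ ∈ Submodule.span A₀ (s₁ : Set (↥m₀ ⧸ Q)) := hs₁span ▸ trivial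
      have h2 : (s₁ : Set (↥m₀ ⧸ Q)) ⊆ Q.mkQ '' ((s₁.image g : Finset ↥m₀) : Set ↥m₀) := by
        intro v hv
        exact ⟨g v, by simpa using ⟨v, hv, rfl⟩, hg v⟩
      have h3 : Q.mkQ ⟨m, hmm⟩ ∈
          Submodule.map Q.mkQ (Submodule.span A₀ ((s₁.image g : Finset ↥m₀) : Set ↥m₀)) := by
        rw [Submodule.map_span]
        exact Submodule.span_mono h2 h1
      have h4 : (⟨m, hmm⟩ : ↥m₀) ∈
          Submodule.span A₀ ((s₁.image g : Finset ↥m₀) : Set ↥m₀) ⊔ Q := by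
        have := Submodule.comap_map_eq Q.mkQ
          (Submodule.span A₀ ((s₁.image g : Finset ↥m₀) : Set ↥m₀))
        rw [Submodule.ker_mkQ] at this
        rw [← this]
        exact h3
      have h5 : m ∈ Submodule.map m₀.subtype
          (Submodule.span A₀ ((s₁.image g : Finset ↥m₀) : Set ↥m₀) ⊔ Q) := ⟨_, h4, rfl⟩
      rw [Submodule.map_sup, Submodule.map_comap_subtype, Submodule.map_span] at h5
      obtain ⟨b₁, hb₁, b₂, hb₂, hb⟩ := Submodule.mem_sup.mp h5
      have hb₁' : (↑b₁ : A) ∈ Submodule.span A U := by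
        have := hcoe _ _ hb₁
        refine Submodule.span_mono ?_ this
        rintro _ ⟨_, ⟨v, hv, rfl⟩, rfl⟩
        refine ⟨f₁ v, ?_, rfl⟩
        obtain ⟨w, hw, rfl⟩ := Finset.mem_image.mp (Finset.mem_coe.mp hv)
        exact Finset.mem_coe.mpr
          (Finset.mem_union_left _ (Finset.mem_image_of_mem (f₁ ∘ g) hw))
      have hb₂' : (↑b₂ : A) ∈ Submodule.span A U := hqle U hA₁U b₂ (Submodule.mem_inf.mp hb₂).2
      have : (↑m : A) = ↑b₁ + ↑b₂ := by rw [← hb]; push_cast; ring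
      rw [this]
      exact Submodule.add_mem _ hb₁' hb₂'
  have hSspan : Submodule.span A (S : Set ↥(maximalIdeal A)) = ⊤ := by
    apply Submodule.map_injective_of_injective (Submodule.injective_subtype (maximalIdeal A))
    rw [Submodule.map_span, Submodule.map_top, Submodule.range_subtype]
    exact hUspan
  have hle : minGen A ↥(maximalIdeal A) ≤
      minGen A₀ (↥m₀ ⧸ Q) + minGen A₀ ↥A₁ := by
    calc minGen A ↥(maximalIdeal A) ≤ S.card := minGen_le S hSspan
    _ ≤ s₁.card + s₂.card := hScard
    _ = _ := by rw [hs₁card, hs₂card]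
  -- lower bound
  obtain ⟨s, hscard, hsspan⟩ := exists_minGen A ↥(maximalIdeal A)
  have hsU : Submodule.span A
      ((fun v : ↥(maximalIdeal A) => (↑v : A)) '' (s : Set ↥(maximalIdeal A))) =
      maximalIdeal A := by
    have h := congrArg (Submodule.map (maximalIdeal A).subtype) hsspan
    rw [Submodule.map_span, Submodule.map_top, Submodule.range_subtype] at h
    exact h
  set k := ResidueField A₀ with hkdef
  set V₁ := (↥m₀ ⧸ Q) ⧸ (maximalIdeal A₀ • ⊤ : Submodule A₀ (↥m₀ ⧸ Q)) with hV₁def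
  set V₂ := ↥A₁ ⧸ (maximalIdeal A₀ • ⊤ : Submodule A₀ ↥A₁) with hV₂def
  haveI : Module.Finite k V₁ := Module.Finite.of_restrictScalars_finite A₀ k V₁
  haveI : Module.Finite k V₂ := Module.Finite.of_restrictScalars_finite A₀ k V₂
  set mk1 : ↥m₀ →ₗ[A₀] V₁ :=
    (Submodule.mkQ (maximalIdeal A₀ • ⊤ : Submodule A₀ (↥m₀ ⧸ Q))).comp Q.mkQ with hmk1def
  set mk2 : ↥A₁ →ₗ[A₀] V₂ :=
    Submodule.mkQ (maximalIdeal A₀ • ⊤ : Submodule A₀ ↥A₁) with hmk2def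
  have hdecn : ∀ e : ↥(maximalIdeal A), ∃ m : ↥m₀, ∃ y : ↥A₁, (↑e : A) = ↑↑m + ↑y := by
    intro e
    have h : (↑e : A) ∈ N := by rw [← hN]; exact e.2
    obtain ⟨m, hmm, y, hy, h⟩ := h
    exact ⟨⟨m, hmm⟩, ⟨y, hy⟩, h⟩
  choose d₀ d₁ hd using hdecn
  set Φ : ↥(maximalIdeal A) → V₁ × V₂ := fun e => (mk1 (d₀ e), mk2 (d₁ e)) with hΦdef
  set W := Submodule.span k (Φ '' (s : Set ↥(maximalIdeal A))) with hWdef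
  have hq0 : ∀ (u : ↥m₀), (↑u : A₀) ∈ q → mk1 u = 0 := by
    intro u hu
    have h1 : Q.mkQ u = 0 := (Submodule.Quotient.mk_eq_zero _).mpr hu
    have h2 : mk1 u =
        Submodule.mkQ (maximalIdeal A₀ • ⊤ : Submodule A₀ (↥m₀ ⧸ Q)) (Q.mkQ u) := rfl
    exact h2.trans (by rw [h1, map_zero])
  have hsmul1 : ∀ (a : A₀) (u : ↥m₀), mk1 (a • u) = (IsLocalRing.residue A₀ a) • mk1 u := fun a u => rfl
  have hsmul2 : ∀ (a : A₀) (u : ↥A₁), mk2 (a • u) = (IsLocalRing.residue A₀ a) • mk2 u := fun a u => rfl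
  have hkey : ∀ z ∈ Submodule.span A
      ((fun v : ↥(maximalIdeal A) => (↑v : A)) '' (s : Set ↥(maximalIdeal A))),
      ∀ (m : ↥m₀) (y : ↥A₁), z = ↑↑m + ↑y → (mk1 m, mk2 y) ∈ W := by
    intro z hz
    refine Submodule.span_induction ?_ ?_ ?_ ?_ hz
    · rintro _ ⟨e, he, rfl⟩ m y hzd
      obtain ⟨h1, h2⟩ := huniq (↑m) (↑(d₀ e)) (↑y) y.2 (↑(d₁ e)) (d₁ e).2
        (by rw [← hzd]; exact hd e)
      have hm' : m = d₀ e := Subtype.ext h1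
      have hy' : y = d₁ e := Subtype.ext h2
      rw [hm', hy']
      exact Submodule.subset_span ⟨e, he, rfl⟩
    · intro m y h0
      obtain ⟨h1, h2⟩ := huniq (↑m) 0 (↑y) y.2 0 (zero_mem _) (by rw [← h0]; push_cast; ring)
      have hm' : m = 0 := Subtype.ext h1
      have hy' : y = 0 := Subtype.ext h2
      rw [hm', hy', map_zero, map_zero]
      exact zero_mem W
    · intro z1 z2 hz1 hz2 ih1 ih2 m y hsum
      have hz1' : z1 ∈ maximalIdeal A := hsU ▸ hz1
      have hz2' : z2 ∈ maximalIdeal A := hsU ▸ hz2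
      rw [hN] at hz1' hz2'
      obtain ⟨m1, hm1, y1, hy1, hd1⟩ := hz1'
      obtain ⟨m2, hm2, y2, hy2, hd2⟩ := hz2'
      obtain ⟨h1, h2⟩ := huniq (↑m) (m1 + m2) (↑y) y.2 (y1 + y2) (add_mem hy1 hy2)
        (by rw [← hsum, hd1, hd2]; push_cast; ring)
      have hm' : m = ⟨m1, hm1⟩ + ⟨m2, hm2⟩ := Subtype.ext h1
      have hy' : y = ⟨y1, hy1⟩ + ⟨y2, hy2⟩ := Subtype.ext h2
      rw [hm', hy', map_add, map_add]
      have := Submodule.add_mem W (ih1 ⟨m1, hm1⟩ ⟨y1, hy1⟩ hd1) (ih2 ⟨m2, hm2⟩ ⟨y2, hy2⟩ hd2)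
      exact this
    · intro a z1 hz1 ih m y hsum
      obtain ⟨a₀, a₁, ha₁, rfl⟩ := hdec a
      have hz1' : z1 ∈ maximalIdeal A := hsU ▸ hz1
      rw [hN] at hz1'
      obtain ⟨mz, hmz, yz, hyz, hdz⟩ := hz1'
      have hq1 : a₁ * yz ∈ A₀ := hgr a₁ ha₁ yz hyz
      have hcomp : (↑a₀ + a₁) • z1 =
          ↑(a₀ * mz + ⟨a₁ * yz, hq1⟩) + (a₀ • yz + mz • a₁) := by
        rw [hdz]
        show (↑a₀ + a₁) * (↑mz + yz) = _
        push_cast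
        show _ = ↑a₀ * ↑mz + ↑a₁ * yz + (↑a₀ * yz + ↑mz * a₁)
        ring
      have hmemm : a₀ * mz + (⟨a₁ * yz, hq1⟩ : A₀) ∈ m₀ :=
        add_mem (Ideal.mul_mem_left _ _ hmz) (hm a₁ ha₁ yz hyz hq1)
      have hmemy : a₀ • yz + mz • a₁ ∈ A₁ :=
        add_mem (A₁.smul_mem _ hyz) (A₁.smul_mem _ ha₁)
      obtain ⟨h1, h2⟩ := huniq (↑m) (a₀ * mz + ⟨a₁ * yz, hq1⟩) (↑y) y.2
        (a₀ • yz + mz • a₁) hmemy (by rw [← hsum, hcomp])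
      have hm' : m = a₀ • (⟨mz, hmz⟩ : ↥m₀) + ⟨⟨a₁ * yz, hq1⟩, hm a₁ ha₁ yz hyz hq1⟩ :=
        Subtype.ext h1
      have hy' : y = a₀ • (⟨yz, hyz⟩ : ↥A₁) + mz • (⟨a₁, ha₁⟩ : ↥A₁) := Subtype.ext h2
      have hq2 : (⟨a₁ * yz, hq1⟩ : A₀) ∈ q :=
        Ideal.subset_span ⟨a₁, ha₁, yz, hyz, rfl⟩
      have e1 : mk1 m = (IsLocalRing.residue A₀ a₀) • mk1 ⟨mz, hmz⟩ := by
        rw [hm', map_add, hsmul1, hq0 ⟨⟨a₁ * yz, hq1⟩, hm a₁ ha₁ yz hyz hq1⟩ hq2, add_zero]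
      have e2 : mk2 y = (IsLocalRing.residue A₀ a₀) • mk2 ⟨yz, hyz⟩ := by
        have hz2 : mk2 (mz • (⟨a₁, ha₁⟩ : ↥A₁)) = 0 := by
          rw [hmk2def]
          exact (Submodule.Quotient.mk_eq_zero _).mpr
            (Submodule.smul_mem_smul hmz Submodule.mem_top)
        rw [hy', map_add, hsmul2, hz2, add_zero]
      rw [e1, e2]
      have := Submodule.smul_mem W (IsLocalRing.residue A₀ a₀) (ih ⟨mz, hmz⟩ ⟨yz, hyz⟩ hdz)
      exact this
  have hWtop : W = ⊤ := by
    rw [eq_top_iff]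
    rintro ⟨v₁, v₂⟩ -
    have hsur1 : Function.Surjective mk1 := by
      rw [hmk1def]
      exact (Submodule.mkQ_surjective _).comp (Submodule.mkQ_surjective _)
    have hsur2 : Function.Surjective mk2 := Submodule.mkQ_surjective _
    obtain ⟨m, rfl⟩ := hsur1 v₁
    obtain ⟨y, rfl⟩ := hsur2 v₂
    refine hkey (↑↑m + ↑y) ?_ m y rfl
    rw [hsU, hN]
    exact ⟨↑m, m.2, ↑y, y.2, rfl⟩
  have hcount : Module.finrank k (V₁ × V₂) ≤ s.card := by
    have hspan' : Submodule.span k ((s.image Φ : Finset (V₁ × V₂)) : Set (V₁ × V₂)) = ⊤ := by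
      rw [Finset.coe_image, ← hWdef]
      exact hWtop
    exact (finrank_le_of_span_finset _ hspan').trans Finset.card_image_le
  have hprod : Module.finrank k (V₁ × V₂) = Module.finrank k V₁ + Module.finrank k V₂ :=
    Module.finrank_prod
  have hge : minGen A₀ (↥m₀ ⧸ Q) + minGen A₀ ↥A₁ ≤ minGen A ↥(maximalIdeal A) := by
    have g1 : minGen A₀ (↥m₀ ⧸ Q) ≤ Module.finrank k V₁ := minGen_le_finrank A₀ (↥m₀ ⧸ Q)
    have g2 : minGen A₀ ↥A₁ ≤ Module.finrank k V₂ := minGen_le_finrank A₀ ↥A₁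
    calc minGen A₀ (↥m₀ ⧸ Q) + minGen A₀ ↥A₁ ≤ Module.finrank k V₁ + Module.finrank k V₂ :=
        add_le_add g1 g2
      _ = Module.finrank k (V₁ × V₂) := hprod.symm
      _ ≤ s.card := hcount
      _ = minGen A ↥(maximalIdeal A) := hscard
  exact le_antisymm hle hge
end

section
/- Let (S, m) be a Noetherian local ring and J an ideal of S such that the minimal number of generators of J is 2 and the minimal number of generators of J² is 2. Then there exists a ∈ J such that J² = aJ. -/
open IsLocalRing

lemma minGen_finset {R M : Type*} [Semiring R] [AddCommMonoid M] [Module R M]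
    (h : minGen R M = 2) :
    ∃ s : Finset M, s.card = 2 ∧ Submodule.span R (s : Set M) = ⊤ := by
  have hne : {n : ℕ | ∃ s : Finset M, s.card = n ∧ Submodule.span R (s : Set M) = ⊤}.Nonempty := by
    by_contra hempty
    rw [Set.not_nonempty_iff_eq_empty] at hempty
    rw [minGen, hempty, Nat.sInf_empty] at h
    exact two_ne_zero h.symm
  have hmem := Nat.sInf_mem hne
  rwa [show sInf _ = minGen R M from rfl, h] at hmem

lemma minGen_ideal_gens {S : Type*} [CommRing S] {I : Ideal S} (h : minGen S I = 2) :
    ∃ x y : S, x ∈ I ∧ y ∈ I ∧ I = Ideal.span {x, y} := by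
  classical
  obtain ⟨s, hcard, hspan⟩ := minGen_finset h
  obtain ⟨x, y, -, rfl⟩ := Finset.card_eq_two.mp hcard
  refine ⟨x, y, x.2, y.2, ?_⟩
  have h2 := congrArg (Submodule.map I.subtype) hspan
  rw [Submodule.map_span, Submodule.map_subtype_top] at h2
  have h3 : (⇑I.subtype '' ↑({x, y} : Finset I)) = {(x : S), (y : S)} := by
    simp [Set.image_insert_eq]
  rw [h3] at h2
  exact h2.symm

/-- Any three elements of an ideal with `minGen = 2` over a Noetherian local ring satisfy
a linear relation mod `m * I` with some coefficient a unit. -/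
lemma exists_relation {S : Type*} [CommRing S] [IsLocalRing S] {I : Ideal S}
    (h : minGen S I = 2) (z : Fin 3 → S) (hz : ∀ i, z i ∈ I) :
    ∃ c : Fin 3 → S, (∃ i, c i ∉ maximalIdeal S) ∧
      ∑ i, c i * z i ∈ maximalIdeal S * I := by
  classical
  obtain ⟨s, hcard, hspan⟩ := minGen_finset h
  set m := maximalIdeal S
  set k := S ⧸ m
  set V := (I ⧸ (m • ⊤ : Submodule S I))
  let π : I →ₗ[S] V := Submodule.mkQ _
  have hVS : Submodule.span S (π '' s) = ⊤ := by
    rw [← Submodule.map_span, hspan, Submodule.map_top, Submodule.range_mkQ]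
  have hVk : Submodule.span k (π '' (s : Set I)) = ⊤ := by
    rw [eq_top_iff]
    intro v _
    have hv : v ∈ Submodule.span S (⇑π '' ↑s) := by rw [hVS]; trivial
    refine Submodule.span_induction (fun w hw => Submodule.subset_span hw) (Submodule.zero_mem _)
      (fun a b _ _ ha hb => Submodule.add_mem _ ha hb) ?_ hv
    intro r w _ hw
    have : r • w = (Ideal.Quotient.mk m r) • w := rfl
    rw [this]
    exact Submodule.smul_mem _ _ hw
  have hfin : Module.Finite k V :=
    ⟨⟨s.image π, by rwa [Finset.coe_image]⟩⟩
  have hfr : Module.finrank k V ≤ 2 := by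
    have h1 : Module.finrank k V = Module.finrank k (Submodule.span k ((s.image π : Finset V) : Set V)) := by
      rw [Finset.coe_image, hVk, finrank_top]
    rw [h1]
    exact (finrank_span_finset_le_card (R := k) _).trans (Finset.card_image_le.trans hcard.le)
  set w : Fin 3 → V := fun i => π ⟨z i, hz i⟩ with hw
  have hnli : ¬ LinearIndependent k w := by
    intro hli
    have := hli.fintype_card_le_finrank
    simp only [Fintype.card_fin] at this
    omega
  obtain ⟨g, hg0, i, hgi⟩ := Fintype.not_linearIndependent_iff.mp hnli
  choose c hc using fun i => Ideal.Quotient.mk_surjective (g i)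
  refine ⟨c, ⟨i, fun hmem => hgi (by rw [← hc i, Ideal.Quotient.eq_zero_iff_mem]; exact hmem)⟩, ?_⟩
  have he : π (∑ j, c j • (⟨z j, hz j⟩ : I)) = 0 := by
    rw [map_sum]
    rw [← hg0]
    congr 1
    ext j
    rw [← hc j]
    rfl
  rw [Submodule.mkQ_apply, Submodule.Quotient.mk_eq_zero] at he
  have := Submodule.mem_map_of_mem (f := I.subtype) he
  rw [Submodule.map_smul'', Submodule.map_subtype_top] at this
  rw [Ideal.smul_eq_mul] at this
  simpa using this

/-- Let `(S, m)` be a Noetherian local ring and `J` an ideal of `S` such that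
`μ_S(J) = 2` and `μ_S(J²) = 2`. Then `J² = aJ` for some `a ∈ J`. -/
theorem sq_eq_mul_of_minGen_two {S : Type*} [CommRing S] [IsNoetherianRing S]
    [IsLocalRing S] (J : Ideal S)
    (h1 : minGen S J = 2) (h2 : minGen S (J ^ 2 : Ideal S) = 2) :
    ∃ a ∈ J, (J ^ 2 : Ideal S) = Ideal.span {a} * J := by
  set m := maximalIdeal S with hm
  obtain ⟨x, y, hx, hy, hJ⟩ := minGen_ideal_gens h1
  have hxx2 : x * x ∈ J ^ 2 := by rw [pow_two]; exact Ideal.mul_mem_mul hx hx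
  have hxy2 : x * y ∈ J ^ 2 := by rw [pow_two]; exact Ideal.mul_mem_mul hx hy
  have hyy2 : y * y ∈ J ^ 2 := by rw [pow_two]; exact Ideal.mul_mem_mul hy hy
  obtain ⟨c, ⟨i, hi⟩, hrel⟩ := exists_relation h2 ![x * x, x * y, y * y] (by
    intro i; fin_cases i <;> assumption)
  rw [Fin.sum_univ_three] at hrel
  simp only [Matrix.cons_val_zero, Matrix.cons_val_one, Matrix.head_cons,
    Matrix.cons_val_two, Matrix.tail_cons] at hrel
  -- J² is spanned by the three products
  have hJ2 : (J ^ 2 : Ideal S) = Ideal.span {x * x, x * y, y * y} := by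
    apply le_antisymm
    · rw [pow_two, Ideal.mul_le]
      intro r hr t ht
      rw [hJ, Ideal.mem_span_pair] at hr ht
      obtain ⟨a, b, rfl⟩ := hr
      obtain ⟨d, e, rfl⟩ := ht
      have heq : (a * x + b * y) * (d * x + e * y) =
          (a * d) * (x * x) + (a * e + b * d) * (x * y) + (b * e) * (y * y) := by ring
      rw [heq]
      have s1 : x * x ∈ Ideal.span {x * x, x * y, y * y} := Ideal.subset_span (by simp)
      have s2 : x * y ∈ Ideal.span {x * x, x * y, y * y} := Ideal.subset_span (by simp)
      have s3 : y * y ∈ Ideal.span {x * x, x * y, y * y} := Ideal.subset_span (by simp)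
      exact add_mem (add_mem (Ideal.mul_mem_left _ _ s1) (Ideal.mul_mem_left _ _ s2))
        (Ideal.mul_mem_left _ _ s3)
    · rw [Ideal.span_le]
      rintro t ht
      simp only [Set.mem_insert_iff, Set.mem_singleton_iff] at ht
      rcases ht with rfl | rfl | rfl <;> assumption
  -- main reduction via Nakayama
  have main : ∀ a ∈ J,
      x * x ∈ Ideal.span {a} * J ⊔ m • (J ^ 2 : Ideal S) →
      x * y ∈ Ideal.span {a} * J ⊔ m • (J ^ 2 : Ideal S) →
      y * y ∈ Ideal.span {a} * J ⊔ m • (J ^ 2 : Ideal S) →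
      ∃ a ∈ J, (J ^ 2 : Ideal S) = Ideal.span {a} * J := by
    intro a ha m1 m2 m3
    refine ⟨a, ha, le_antisymm ?_ ?_⟩
    · apply Submodule.le_of_le_smul_of_le_jacobson_bot (IsNoetherian.noetherian _)
        (ge_of_eq (IsLocalRing.jacobson_eq_maximalIdeal ⊥ bot_ne_top))
      refine hJ2.trans_le (Ideal.span_le.mpr ?_)
      rintro t ht
      simp only [Set.mem_insert_iff, Set.mem_singleton_iff] at ht
      rcases ht with rfl | rfl | rfl
      · exact m1
      · exact m2
      · exact m3
    · rw [pow_two]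
      exact Ideal.mul_mono (Ideal.span_le.mpr (by simpa using ha)) le_rfl
  have hrel' : c 0 * (x * x) + c 1 * (x * y) + c 2 * (y * y) ∈ m • (J ^ 2 : Ideal S) := by
    rwa [Ideal.smul_eq_mul]
  by_cases h0 : c 0 ∈ m
  · by_cases hc2 : c 2 ∈ m
    · -- middle coefficient is a unit; a = x + y
      have hb : c 1 ∉ m := by
        fin_cases i
        · exact absurd h0 hi
        · exact hi
        · exact absurd hc2 hi
      have hu : IsUnit (c 1) := not_not.mp hb
      obtain ⟨u, hu1⟩ := hu.exists_left_inv
      have hxyJ : x * y ∈ m • (J ^ 2 : Ideal S) := by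
        rw [Ideal.smul_eq_mul]
        have h01 : c 1 * (x * y) =
            (c 0 * (x * x) + c 1 * (x * y) + c 2 * (y * y)) - c 0 * (x * x) - c 2 * (y * y) := by
          ring
        have hmem : c 1 * (x * y) ∈ m * J ^ 2 := by
          rw [h01]
          exact sub_mem (sub_mem hrel (Ideal.mul_mem_mul h0 hxx2)) (Ideal.mul_mem_mul hc2 hyy2)
        have := Ideal.mul_mem_left _ u hmem
        rwa [← mul_assoc, hu1, one_mul] at this
      have haJ : x + y ∈ J := J.add_mem hx hy
      have hxyN : x * y ∈ Ideal.span {x + y} * J ⊔ m • (J ^ 2 : Ideal S) :=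
        Submodule.mem_sup_right hxyJ
      refine main (x + y) haJ ?_ hxyN ?_
      · have heq : x * x = (x + y) * x - x * y := by ring
        rw [heq]
        exact sub_mem (Submodule.mem_sup_left
          (Ideal.mul_mem_mul (Ideal.mem_span_singleton_self _) hx)) hxyN
      · have heq : y * y = (x + y) * y - x * y := by ring
        rw [heq]
        exact sub_mem (Submodule.mem_sup_left
          (Ideal.mul_mem_mul (Ideal.mem_span_singleton_self _) hy)) hxyN
    · -- c 2 is a unit; a = x
      have hu : IsUnit (c 2) := not_not.mp hc2
      obtain ⟨u, hu1⟩ := hu.exists_left_inv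
      refine main x hx
        (Submodule.mem_sup_left (Ideal.mul_mem_mul (Ideal.mem_span_singleton_self _) hx))
        (Submodule.mem_sup_left (Ideal.mul_mem_mul (Ideal.mem_span_singleton_self _) hy)) ?_
      have heq : y * y = u * (c 0 * (x * x) + c 1 * (x * y) + c 2 * (y * y))
          - x * (u * c 0 * x) - x * (u * c 1 * y) := by
        linear_combination (-(y * y)) * hu1
      rw [heq]
      refine sub_mem (sub_mem (Submodule.mem_sup_right ?_) (Submodule.mem_sup_left ?_))
        (Submodule.mem_sup_left ?_)
      · exact Ideal.mul_mem_left _ _ hrel'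
      · exact Ideal.mul_mem_mul (Ideal.mem_span_singleton_self _) (J.mul_mem_left _ hx)
      · exact Ideal.mul_mem_mul (Ideal.mem_span_singleton_self _) (J.mul_mem_left _ hy)
  · -- c 0 is a unit; a = y
    have hu : IsUnit (c 0) := not_not.mp h0
    obtain ⟨u, hu1⟩ := hu.exists_left_inv
    have hxyN : x * y ∈ Ideal.span {y} * J ⊔ m • (J ^ 2 : Ideal S) := by
      rw [mul_comm x y]
      exact Submodule.mem_sup_left (Ideal.mul_mem_mul (Ideal.mem_span_singleton_self _) hx)
    refine main y hy ?_ hxyN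
      (Submodule.mem_sup_left (Ideal.mul_mem_mul (Ideal.mem_span_singleton_self _) hy))
    have heq : x * x = u * (c 0 * (x * x) + c 1 * (x * y) + c 2 * (y * y))
        - y * (u * c 1 * x) - y * (u * c 2 * y) := by
      linear_combination (-(x * x)) * hu1
    rw [heq]
    refine sub_mem (sub_mem (Submodule.mem_sup_right ?_) (Submodule.mem_sup_left ?_))
      (Submodule.mem_sup_left ?_)
    · exact Ideal.mul_mem_left _ _ hrel'
    · exact Ideal.mul_mem_mul (Ideal.mem_span_singleton_self _) (J.mul_mem_left _ hx)
    · exact Ideal.mul_mem_mul (Ideal.mem_span_singleton_self _) (J.mul_mem_left _ hy)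
end
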